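/- arXiv:2008.05594 — 18 statements merged into one kernel-verified Lean document; each statement's English description precedes it below -/
import Mathlib

section
/- Let S be a binary string of length n and let L, R ⊆ {1,…,n} be such that every element of L is strictly smaller than every element of R. Suppose there exist indices i and j with i, i+2 ∈ L, j−2, j ∈ R, i ≡ j (mod 2), S[i] = S[j], S[i+2] = S[j−2], and S[i] ≠ S[i+2]. Then S has an L-R-3-cadence, i.e., there exist integers i', d with d > 0, i' ∈ L, i'+2d ∈ R, and S[i'] = S[i'+d] = S[i'+2d]. -/
/-- If a binary string `S` of length `n` and sets
`L, R ⊆ {1,…,n}` (with every element of `L` below every element of `R`)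
admit indices `i, i+2 ∈ L` and `j-2, j ∈ R` of equal parity with
`S[i] = S[j] ≠ S[i+2] = S[j-2]`, then `S` has an `L`-`R`-3-cadence. -/
theorem stmt_0 (n : ℕ) (S : ℕ → Bool) (L R : Set ℕ)
    (hL : L ⊆ Set.Icc 1 n) (hR : R ⊆ Set.Icc 1 n)
    (hLR : ∀ l ∈ L, ∀ r ∈ R, l < r)
    (i j : ℕ)
    (hiL : i ∈ L) (hi2L : i + 2 ∈ L)
    (hjR : j ∈ R) (hj2R : j - 2 ∈ R)
    (hpar : i % 2 = j % 2)
    (h1 : S i = S j) (h2 : S (i + 2) = S (j - 2)) (h3 : S i ≠ S (i + 2)) :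
    ∃ i' d : ℕ, 0 < d ∧ i' ∈ L ∧ i' + 2 * d ∈ R ∧ 1 ≤ i' ∧ i' + 2 * d ≤ n ∧
      S i' = S (i' + d) ∧ S (i' + d) = S (i' + 2 * d) := by
  have hlt : i + 2 < j - 2 := hLR _ hi2L _ hj2R
  have hi1 : 1 ≤ i := (hL hiL).1
  have hj1 : 1 ≤ j := (hR hjR).1
  have hjn : j ≤ n := (hR hjR).2
  have hj2n : j - 2 ≤ n := (hR hj2R).2
  obtain ⟨d, hd⟩ : ∃ d, j = i + 2 * d := by
    refine ⟨(j - i) / 2, ?_⟩; omega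
  have hd3 : 3 ≤ d := by omega
  by_cases hm : S (i + d) = S i
  · refine ⟨i, d, by omega, hiL, ?_, hi1, ?_, hm.symm, ?_⟩
    · rw [← hd]; exact hjR
    · omega
    · rw [hm, show i + 2 * d = j by omega, ← h1]
  · have hm2 : S (i + d) = S (i + 2) := by
      cases hb : S (i + d) <;> cases hb2 : S i <;> cases hb3 : S (i + 2) <;>
        simp_all
    refine ⟨i + 2, d - 2, by omega, hi2L, ?_, by omega, ?_, ?_, ?_⟩
    · rw [show i + 2 + 2 * (d - 2) = j - 2 by omega]; exact hj2R
    · omega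
    · rw [show i + 2 + (d - 2) = i + d by omega]; exact hm2.symm
    · rw [show i + 2 + (d - 2) = i + d by omega,
        show i + 2 + 2 * (d - 2) = j - 2 by omega, hm2, h2]
end

section
/- Let S be a binary string of length n and let L, R ⊆ {1,…,n} be intervals of consecutive integers such that every element of L is strictly smaller than every element of R, and suppose S has no L-R-3-cadence. If the string S[L_even] is of the form 0^i 1^{i'} with i, i' ≥ 1, then the string S[R_even] is of the form 0^j 1^{j'} for some j, j' ≥ 0 (equivalently, there are no two elements r₁ < r₂ of R_even with S[r₁] = 1 and S[r₂] = 0). -/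
/-- Let `S` be a binary string of length `n`, `L = [la,lb]` and
`R = [ra,rb]` intervals inside `{1,…,n}` with all of `L` below all of `R`, and
suppose `S` has no `L`-`R`-3-cadence.  If `S[L_even]` is of the form
`0^i 1^{i'}` with `i, i' ≥ 1` (i.e. both characters occur among the even
positions of `L` and a `1` is never followed by a `0` there), then
`S[R_even]` is of the form `0^j 1^{j'}`: there are no `r₁ < r₂` in `R_even`
with `S[r₁] = 1` and `S[r₂] = 0`. -/
theorem stmt_1 (n la lb ra rb : ℕ) (S : ℕ → Bool)
    (hL : Set.Icc la lb ⊆ Set.Icc 1 n) (hR : Set.Icc ra rb ⊆ Set.Icc 1 n)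
    (hLR : ∀ l ∈ Set.Icc la lb, ∀ r ∈ Set.Icc ra rb, l < r)
    (hno : ¬ ∃ i d : ℕ, 0 < d ∧ i ∈ Set.Icc la lb ∧ i + 2 * d ∈ Set.Icc ra rb ∧
        1 ≤ i ∧ i + 2 * d ≤ n ∧ S i = S (i + d) ∧ S (i + d) = S (i + 2 * d))
    (hL0 : ∃ l ∈ Set.Icc la lb, Even l ∧ S l = false)
    (hL1 : ∃ l ∈ Set.Icc la lb, Even l ∧ S l = true)
    (hLmono : ∀ l₁ ∈ Set.Icc la lb, ∀ l₂ ∈ Set.Icc la lb,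
        Even l₁ → Even l₂ → l₁ < l₂ → S l₁ = true → S l₂ = true) :
    ∀ r₁ ∈ Set.Icc ra rb, ∀ r₂ ∈ Set.Icc ra rb, Even r₁ → Even r₂ → r₁ < r₂ →
      ¬ (S r₁ = true ∧ S r₂ = false) := by
  rintro r₁ hr₁ r₂ hr₂ her₁ her₂ hrlt ⟨hSr₁, hSr₂⟩
  obtain ⟨l1, hl1, hel1, hSl1⟩ := hL1
  -- l0 : the largest even position in L with value false
  set F : Finset ℕ := (Finset.Icc la lb).filter (fun l => Even l ∧ S l = false) with hF
  have hFne : F.Nonempty := by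
    obtain ⟨l0', hl0', hel0', hSl0'⟩ := hL0
    exact ⟨l0', by simp [hF, Finset.mem_filter, Finset.mem_Icc,
      (Set.mem_Icc.mp hl0').1, (Set.mem_Icc.mp hl0').2, hel0', hSl0']⟩
  set l0 := F.max' hFne with hl0def
  have hl0F : l0 ∈ F := F.max'_mem hFne
  have hl0mem : l0 ∈ Set.Icc la lb := by
    simp only [hF, Finset.mem_filter, Finset.mem_Icc] at hl0F
    exact Set.mem_Icc.mpr ⟨hl0F.1.1, hl0F.1.2⟩
  have hel0 : Even l0 := by
    simp only [hF, Finset.mem_filter] at hl0F; exact hl0F.2.1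
  have hSl0 : S l0 = false := by
    simp only [hF, Finset.mem_filter] at hl0F; exact hl0F.2.2
  -- l0 < l1
  have hl0l1 : l0 < l1 := by
    rcases lt_trichotomy l0 l1 with h | h | h
    · exact h
    · rw [h, hSl1] at hSl0; exact absurd hSl0 (by simp)
    · have := hLmono l1 hl1 l0 hl0mem hel1 hel0 h hSl1
      rw [this] at hSl0; exact absurd hSl0 (by simp)
  -- even witnesses
  obtain ⟨a0, ha0⟩ := hel0
  obtain ⟨a1, ha1⟩ := hel1
  have hl02mem : l0 + 2 ∈ Set.Icc la lb := by
    have h1 := (Set.mem_Icc.mp hl0mem).1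
    have h2 := (Set.mem_Icc.mp hl1).2
    exact Set.mem_Icc.mpr ⟨by omega, by omega⟩
  have hSl02 : S (l0 + 2) = true := by
    by_contra h
    have h' : S (l0 + 2) = false := by
      cases hv : S (l0 + 2) with
      | false => rfl
      | true => exact absurd hv h
    have : l0 + 2 ∈ F := by
      simp only [hF, Finset.mem_filter, Finset.mem_Icc]
      exact ⟨⟨(Set.mem_Icc.mp hl02mem).1, (Set.mem_Icc.mp hl02mem).2⟩,
        ⟨a0 + 1, by omega⟩, h'⟩
    have := F.le_max' _ this
    omega
  -- r : largest even position in [r₁, r₂-2] with value true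
  obtain ⟨b1, hb1⟩ := her₁
  obtain ⟨b2, hb2⟩ := her₂
  set G : Finset ℕ := (Finset.Icc r₁ (r₂ - 2)).filter (fun r => Even r ∧ S r = true) with hG
  have hGne : G.Nonempty := by
    refine ⟨r₁, ?_⟩
    simp only [hG, Finset.mem_filter, Finset.mem_Icc]
    exact ⟨⟨le_refl _, by omega⟩, ⟨b1, hb1⟩, hSr₁⟩
  set r := G.max' hGne with hrdef
  have hrG : r ∈ G := G.max'_mem hGne
  have hrrange : r₁ ≤ r ∧ r ≤ r₂ - 2 := by
    simp only [hG, Finset.mem_filter, Finset.mem_Icc] at hrG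
    exact hrG.1
  have her : Even r := by simp only [hG, Finset.mem_filter] at hrG; exact hrG.2.1
  have hSr : S r = true := by simp only [hG, Finset.mem_filter] at hrG; exact hrG.2.2
  obtain ⟨c, hc⟩ := her
  have hrmem : r ∈ Set.Icc ra rb := by
    have h1 := (Set.mem_Icc.mp hr₁).1
    have h2 := (Set.mem_Icc.mp hr₂).2
    exact Set.mem_Icc.mpr ⟨by omega, by omega⟩
  have hr2mem : r + 2 ∈ Set.Icc ra rb := by
    have h1 := (Set.mem_Icc.mp hr₁).1
    have h2 := (Set.mem_Icc.mp hr₂).2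
    exact Set.mem_Icc.mpr ⟨by omega, by omega⟩
  have hSr2 : S (r + 2) = false := by
    by_cases h : r + 2 = r₂
    · rw [h]; exact hSr₂
    · by_contra hv
      have hv' : S (r + 2) = true := by
        cases hw : S (r + 2) with
        | true => rfl
        | false => exact absurd hw hv
      have : r + 2 ∈ G := by
        simp only [hG, Finset.mem_filter, Finset.mem_Icc]
        exact ⟨⟨by omega, by omega⟩, ⟨c + 1, by omega⟩, hv'⟩
      have := G.le_max' _ this
      omega
  -- positions relative order
  have hlr : l0 + 2 < r := hLR _ hl02mem _ hrmem
  -- bounds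
  have hl0n := Set.mem_Icc.mp (hL hl0mem)
  have hl02n := Set.mem_Icc.mp (hL hl02mem)
  have hrn := Set.mem_Icc.mp (hR hrmem)
  have hr2n := Set.mem_Icc.mp (hR hr2mem)
  -- midpoint
  set dA := c + 1 - a0 with hdA
  set dB := c - 1 - a0 with hdB
  have hAeq : r + 2 = l0 + 2 * dA := by omega
  have hBeq : r = (l0 + 2) + 2 * dB := by omega
  have hsame : l0 + dA = (l0 + 2) + dB := by omega
  set m := l0 + dA with hm
  -- first application of hno : S m = true
  have hm1 : S m = true := by
    cases hv : S m with
    | true => rfl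
    | false =>
      exfalso
      apply hno
      refine ⟨l0, dA, by omega, hl0mem, by rw [← hAeq]; exact hr2mem, by omega,
        by omega, ?_, ?_⟩
      · rw [hSl0, ← hm, hv]
      · rw [← hm, hv, ← hAeq, hSr2]
  -- second application of hno : S m = false
  have hm2 : S m = false := by
    cases hv : S m with
    | false => rfl
    | true =>
      exfalso
      apply hno
      refine ⟨l0 + 2, dB, by omega, hl02mem, by rw [← hBeq]; exact hrmem, by omega,
        by omega, ?_, ?_⟩
      · rw [hSl02, ← hsame, hv]
      · rw [← hsame, hv, ← hBeq, hSr]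
  rw [hm1] at hm2
  exact absurd hm2 (by simp)
end

section
/- Let S be a binary string of length n and let L, R ⊆ {1,…,n} be intervals of consecutive integers such that every element of L is strictly smaller than every element of R, and suppose S has no L-R-3-cadence. If the string S[L_even] is of the form 1^i 0^{i'} with i, i' ≥ 1, then the string S[R_even] is of the form 1^j 0^{j'} for some j, j' ≥ 0 (equivalently, there are no two elements r₁ < r₂ of R_even with S[r₁] = 0 and S[r₂] = 1). -/
/-- Boundary lemma: if `S a = x` and `S (a + 2k) = !x`, there is a switch point
`l` with `S l = x`, `S (l+2) = !x`, both within `[a, a+2k]`, and `l` even. -/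
lemma stmt_2_bdry (S : ℕ → Bool) (x : Bool) : ∀ k a, Even a → S a = x → S (a + 2*k) = !x →
    ∃ l, a ≤ l ∧ l + 2 ≤ a + 2*k ∧ Even l ∧ S l = x ∧ S (l+2) = !x := by
  intro k
  induction k with
  | zero =>
    intro a _ h1 h2
    simp only [Nat.mul_zero, Nat.add_zero] at h2
    rw [h1] at h2; cases x <;> simp at h2
  | succ k ih =>
    intro a ha h1 h2
    by_cases h : S (a+2) = !x
    · exact ⟨a, le_refl _, by omega, ha, h1, h⟩
    · have h' : S (a+2) = x := by cases x <;> simp_all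
      obtain ⟨l, h3, h4, h5, h6, h7⟩ := ih (a+2) (ha.add even_two) h' (by
        have : a + 2 + 2*k = a + 2*(k+1) := by ring
        rw [this]; exact h2)
      exact ⟨l, by omega, by omega, h5, h6, h7⟩

/-- Let `S` be a binary string of length `n`, `L = [la,lb]` and
`R = [ra,rb]` intervals inside `{1,…,n}` with all of `L` below all of `R`, and
suppose `S` has no `L`-`R`-3-cadence.  If `S[L_even]` is of the form
`1^i 0^{i'}` with `i, i' ≥ 1`, then `S[R_even]` is of the form `1^j 0^{j'}`:
there are no `r₁ < r₂` in `R_even` with `S[r₁] = 0` and `S[r₂] = 1`. -/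
theorem stmt_2 (n la lb ra rb : ℕ) (S : ℕ → Bool)
    (hL : Set.Icc la lb ⊆ Set.Icc 1 n) (hR : Set.Icc ra rb ⊆ Set.Icc 1 n)
    (hLR : ∀ l ∈ Set.Icc la lb, ∀ r ∈ Set.Icc ra rb, l < r)
    (hno : ¬ ∃ i d : ℕ, 0 < d ∧ i ∈ Set.Icc la lb ∧ i + 2 * d ∈ Set.Icc ra rb ∧
        1 ≤ i ∧ i + 2 * d ≤ n ∧ S i = S (i + d) ∧ S (i + d) = S (i + 2 * d))
    (hL1 : ∃ l ∈ Set.Icc la lb, Even l ∧ S l = true)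
    (hL0 : ∃ l ∈ Set.Icc la lb, Even l ∧ S l = false)
    (hLmono : ∀ l₁ ∈ Set.Icc la lb, ∀ l₂ ∈ Set.Icc la lb,
        Even l₁ → Even l₂ → l₁ < l₂ → S l₁ = false → S l₂ = false) :
    ∀ r₁ ∈ Set.Icc ra rb, ∀ r₂ ∈ Set.Icc ra rb, Even r₁ → Even r₂ → r₁ < r₂ →
      ¬ (S r₁ = false ∧ S r₂ = true) := by
  rintro r₁ hr₁ r₂ hr₂ her₁ her₂ hrlt ⟨hSr₁, hSr₂⟩
  push_neg at hno
  obtain ⟨l₁, hl₁, hel₁, hSl₁⟩ := hL1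
  obtain ⟨l₀, hl₀, hel₀, hSl₀⟩ := hL0
  -- l₁ < l₀
  have hllt : l₁ < l₀ := by
    rcases lt_trichotomy l₁ l₀ with h | h | h
    · exact h
    · rw [h, hSl₀] at hSl₁; exact absurd hSl₁ (by simp)
    · have := hLmono l₀ hl₀ l₁ hl₁ hel₀ hel₁ h hSl₀
      rw [this] at hSl₁; exact absurd hSl₁ (by simp)
  -- boundary in L
  obtain ⟨kL, hkL⟩ : ∃ k, l₀ = l₁ + 2 * k := by
    obtain ⟨a, ha⟩ := hel₁; obtain ⟨b, hb⟩ := hel₀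
    exact ⟨b - a, by omega⟩
  obtain ⟨l, hll, hlu, hel, hSl, hSl2⟩ :=
    stmt_2_bdry S true kL l₁ hel₁ hSl₁ (by rw [← hkL]; simpa using hSl₀)
  -- boundary in R
  obtain ⟨kR, hkR⟩ : ∃ k, r₂ = r₁ + 2 * k := by
    obtain ⟨a, ha⟩ := her₁; obtain ⟨b, hb⟩ := her₂
    exact ⟨b - a, by omega⟩
  obtain ⟨r, hrl, hru, her, hSr, hSr2⟩ :=
    stmt_2_bdry S false kR r₁ her₁ hSr₁ (by rw [← hkR]; simpa using hSr₂)
  rw [← hkL] at hlu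
  rw [← hkR] at hru
  simp only [Set.mem_Icc] at hl₁ hl₀ hr₁ hr₂
  have hlmem : l ∈ Set.Icc la lb := Set.mem_Icc.mpr ⟨by omega, by omega⟩
  have hl2mem : l + 2 ∈ Set.Icc la lb := Set.mem_Icc.mpr ⟨by omega, by omega⟩
  have hrmem : r ∈ Set.Icc ra rb := Set.mem_Icc.mpr ⟨by omega, by omega⟩
  have hr2mem : r + 2 ∈ Set.Icc ra rb := Set.mem_Icc.mpr ⟨by omega, by omega⟩
  have hlt2 : l + 2 < r := hLR (l + 2) hl2mem r hrmem
  -- r = l + 2t with t ≥ 2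
  obtain ⟨t, ht⟩ : ∃ t, r = l + 2 * t := by
    obtain ⟨a, ha⟩ := hel; obtain ⟨b, hb⟩ := her
    exact ⟨b - a, by omega⟩
  have ht2 : 2 ≤ t := by omega
  have h1n : 1 ≤ l := (Set.mem_Icc.mp (hL hlmem)).1
  have hrn : r + 2 ≤ n := (Set.mem_Icc.mp (hR hr2mem)).2
  -- cadence 1: (l, t+1), endpoints l and r+2, midpoint l+t+1
  have hc1 := hno l (t+1) (by omega) hlmem (by
      have : l + 2 * (t+1) = r + 2 := by omega
      rw [this]; exact hr2mem) h1n (by omega)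
  have hc2 := hno (l+2) (t-1) (by omega) hl2mem (by
      have : l + 2 + 2 * (t-1) = r := by omega
      rw [this]; exact hrmem) (by omega) (by omega)
  have e1 : l + 2 * (t+1) = r + 2 := by omega
  have e2 : l + 2 + 2 * (t-1) = r := by omega
  have e3 : l + (t+1) = l + t + 1 := by omega
  have e4 : l + 2 + (t-1) = l + t + 1 := by omega
  rw [e1, e3] at hc1
  rw [e2, e4] at hc2
  rw [hSl, hSr2] at hc1
  rw [hSl2, hSr] at hc2
  cases h : S (l + t + 1) <;> simp [h] at hc1 hc2
end

section
/- Let S be a binary string of length n and let L, R ⊆ {1,…,n} be intervals of consecutive integers such that every element of L is strictly smaller than every element of R, and suppose S has no L-R-3-cadence. If the string S[L_even] contains both 01 and 10 as contiguous substrings (i.e., there are consecutive elements a < a+2 of L_even with S[a]=0, S[a+2]=1 and consecutive elements b < b+2 of L_even with S[b]=1, S[b+2]=0), then S[R_even] is constant, i.e., of the form 0^j or of the form 1^j. -/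
private lemma key_lemma (n la lb ra rb : ℕ) (S : ℕ → Bool)
    (hL : Set.Icc la lb ⊆ Set.Icc 1 n) (hR : Set.Icc ra rb ⊆ Set.Icc 1 n)
    (hLR : ∀ l ∈ Set.Icc la lb, ∀ r ∈ Set.Icc ra rb, l < r)
    (hno : ¬ ∃ i d : ℕ, 0 < d ∧ i ∈ Set.Icc la lb ∧ i + 2 * d ∈ Set.Icc ra rb ∧
        1 ≤ i ∧ i + 2 * d ≤ n ∧ S i = S (i + d) ∧ S (i + d) = S (i + 2 * d))
    (x : Bool) (l r : ℕ)
    (hl : l ∈ Set.Icc la lb) (hl2 : l + 2 ∈ Set.Icc la lb)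
    (hr : r ∈ Set.Icc ra rb) (hr2 : r + 2 ∈ Set.Icc ra rb)
    (hel : Even l) (her : Even r)
    (hSl : S l = x) (hSl2 : S (l + 2) = !x)
    (hSr : S r = !x) (hSr2 : S (r + 2) = x) : False := by
  have hlr : l + 2 < r := hLR _ hl2 _ hr
  obtain ⟨u, hu⟩ := hel
  obtain ⟨v, hv⟩ := her
  obtain ⟨q, hq⟩ : ∃ q, r = l + 2 * q + 4 := ⟨v - u - 2, by omega⟩
  have heq1 : l + 2 * (q + 3) = r + 2 := by omega
  have heq2 : l + 2 + 2 * (q + 1) = r := by omega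
  have hmid1 : l + (q + 3) = l + q + 3 := by omega
  have hmid2 : l + 2 + (q + 1) = l + q + 3 := by omega
  have h1n : l + 2 * (q + 3) ≤ n := by have := (hR hr2).2; omega
  have h2n : l + 2 + 2 * (q + 1) ≤ n := by have := (hR hr).2; omega
  have c1 : ¬ (S l = S (l + q + 3) ∧ S (l + q + 3) = S (r + 2)) := by
    intro hc
    exact hno ⟨l, q + 3, by omega, hl, heq1 ▸ hr2, (hL hl).1, h1n,
      hmid1 ▸ hc.1, by rw [hmid1, heq1]; exact hc.2⟩
  have c2 : ¬ (S (l + 2) = S (l + q + 3) ∧ S (l + q + 3) = S r) := by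
    intro hc
    exact hno ⟨l + 2, q + 1, by omega, hl2, heq2 ▸ hr, (hL hl2).1, h2n,
      hmid2 ▸ hc.1, by rw [hmid2, heq2]; exact hc.2⟩
  cases hm : S (l + q + 3) <;> cases x <;> simp_all

private lemma trans_lemma (ra rb : ℕ) (S : ℕ → Bool) :
    ∀ k r, Even r → ra ≤ r → r + 2 * k ≤ rb → S r ≠ S (r + 2 * k) →
      ∃ t, Even t ∧ ra ≤ t ∧ t + 2 ≤ rb ∧ S t ≠ S (t + 2) := by
  intro k
  induction k with
  | zero => intro r _ _ _ hne; simp at hne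
  | succ k ih =>
    intro r her hra hrb hne
    by_cases h : S r = S (r + 2)
    · obtain ⟨t, ht⟩ := ih (r + 2) (by obtain ⟨u, hu⟩ := her; exact ⟨u + 1, by omega⟩)
        (by omega) (by omega)
        (by rw [← h]; intro hc; exact hne (by rw [hc]; congr 1; omega))
      exact ⟨t, ht⟩
    · exact ⟨r, her, hra, by omega, h⟩

/-- Let `S` be a binary string of length `n`, `L = [la,lb]` and
`R = [ra,rb]` intervals inside `{1,…,n}` with all of `L` below all of `R`, and
suppose `S` has no `L`-`R`-3-cadence.  If `S[L_even]` contains both `01` and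
`10` as contiguous substrings (consecutive even positions of `L`), then
`S[R_even]` is constant. -/
theorem stmt_3 (n la lb ra rb : ℕ) (S : ℕ → Bool)
    (hL : Set.Icc la lb ⊆ Set.Icc 1 n) (hR : Set.Icc ra rb ⊆ Set.Icc 1 n)
    (hLR : ∀ l ∈ Set.Icc la lb, ∀ r ∈ Set.Icc ra rb, l < r)
    (hno : ¬ ∃ i d : ℕ, 0 < d ∧ i ∈ Set.Icc la lb ∧ i + 2 * d ∈ Set.Icc ra rb ∧
        1 ≤ i ∧ i + 2 * d ≤ n ∧ S i = S (i + d) ∧ S (i + d) = S (i + 2 * d))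
    (h01 : ∃ a, a ∈ Set.Icc la lb ∧ a + 2 ∈ Set.Icc la lb ∧ Even a ∧
        S a = false ∧ S (a + 2) = true)
    (h10 : ∃ b, b ∈ Set.Icc la lb ∧ b + 2 ∈ Set.Icc la lb ∧ Even b ∧
        S b = true ∧ S (b + 2) = false) :
    ∀ r₁ ∈ Set.Icc ra rb, ∀ r₂ ∈ Set.Icc ra rb, Even r₁ → Even r₂ →
      S r₁ = S r₂ := by
  -- it suffices to show there is no transition in R_even
  have notrans : ∀ t, Even t → ra ≤ t → t + 2 ≤ rb → S t = S (t + 2) := by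
    intro t het hta htb
    by_contra hne
    have ht : t ∈ Set.Icc ra rb := ⟨hta, by omega⟩
    have ht2 : t + 2 ∈ Set.Icc ra rb := ⟨by omega, htb⟩
    cases hst : S t with
    | false =>
      obtain ⟨b, hb, hb2, heb, hSb, hSb2⟩ := h10
      exact key_lemma n la lb ra rb S hL hR hLR hno true b t hb hb2 ht ht2 heb het
        hSb (by simpa using hSb2) (by simpa using hst)
        (by cases h2 : S (t + 2) <;> simp_all)
    | true =>
      obtain ⟨a, ha, ha2, hea, hSa, hSa2⟩ := h01
      exact key_lemma n la lb ra rb S hL hR hLR hno false a t ha ha2 ht ht2 hea het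
        hSa (by simpa using hSa2) (by simpa using hst)
        (by cases h2 : S (t + 2) <;> simp_all)
  -- now constancy
  have main : ∀ r₁ ∈ Set.Icc ra rb, ∀ r₂ ∈ Set.Icc ra rb, Even r₁ → Even r₂ →
      r₁ < r₂ → S r₁ = S r₂ := by
    intro r₁ h1 r₂ h2 e1 e2 hlt
    by_contra hne
    obtain ⟨u, hu⟩ := e1
    obtain ⟨v, hv⟩ := e2
    obtain ⟨t, het, hta, htb, htne⟩ := trans_lemma ra rb S (v - u) r₁ ⟨u, hu⟩ h1.1
      (by have := h2.2; omega)
      (by intro hc; apply hne; rw [hc]; congr 1; omega)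
    exact htne (notrans t het hta htb)
  intro r₁ h1 r₂ h2 e1 e2
  rcases lt_trichotomy r₁ r₂ with h | h | h
  · exact main r₁ h1 r₂ h2 e1 e2 h
  · rw [h]
  · exact (main r₂ h2 r₁ h1 e2 e1 h).symm
end

section
/- Let S be a binary string of length n and let L, R ⊆ {1,…,n} be intervals of consecutive integers such that every element of L is strictly smaller than every element of R, L_even and R_even are nonempty, S[l] = 0 for every l ∈ L_even, and S[r] = 0 for every r ∈ R_even. Set l_min = min L_even, l_max = max L_even, r_min = min R_even and r_max = max R_even. Then S has an even L-R-3-cadence if and only if there exists an index m with (l_min + r_min)/2 ≤ m ≤ (l_max + r_max)/2 and S[m] = 0. -/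
/-- Lemma `LR01`.  Let `S` be a binary string of length `n`,
`L = [la,lb]` and `R = [ra,rb]` intervals inside `{1,…,n}` with all of `L`
below all of `R`, whose even positions are all `0` in `S`.  With
`l_min, l_max, r_min, r_max` the extremal even elements, `S` has an even
`L`-`R`-3-cadence iff there is an index `m` with
`(l_min+r_min)/2 ≤ m ≤ (l_max+r_max)/2` and `S[m] = 0`. -/
theorem stmt_4 (n la lb ra rb : ℕ) (S : ℕ → Bool)
    (hL : Set.Icc la lb ⊆ Set.Icc 1 n) (hR : Set.Icc ra rb ⊆ Set.Icc 1 n)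
    (hLR : ∀ l ∈ Set.Icc la lb, ∀ r ∈ Set.Icc ra rb, l < r)
    (hSL : ∀ l ∈ Set.Icc la lb, Even l → S l = false)
    (hSR : ∀ r ∈ Set.Icc ra rb, Even r → S r = false)
    (lmin lmax rmin rmax : ℕ)
    (hlmin : IsLeast {x | x ∈ Set.Icc la lb ∧ Even x} lmin)
    (hlmax : IsGreatest {x | x ∈ Set.Icc la lb ∧ Even x} lmax)
    (hrmin : IsLeast {x | x ∈ Set.Icc ra rb ∧ Even x} rmin)
    (hrmax : IsGreatest {x | x ∈ Set.Icc ra rb ∧ Even x} rmax) :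
    (∃ i d : ℕ, 0 < d ∧ Even i ∧ i ∈ Set.Icc la lb ∧ i + 2 * d ∈ Set.Icc ra rb ∧
       1 ≤ i ∧ i + 2 * d ≤ n ∧ S i = S (i + d) ∧ S (i + d) = S (i + 2 * d)) ↔
    (∃ m, (lmin + rmin) / 2 ≤ m ∧ m ≤ (lmax + rmax) / 2 ∧ S m = false) := by

  obtain ⟨⟨hlminL, a, ha⟩, hlminLB⟩ := hlmin
  obtain ⟨⟨hlmaxL, c, hc⟩, hlmaxUB⟩ := hlmax
  obtain ⟨⟨hrminR, b, hb⟩, hrminLB⟩ := hrmin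
  obtain ⟨⟨hrmaxR, e, he⟩, hrmaxUB⟩ := hrmax
  constructor
  · rintro ⟨i, d, hd, hie, hiL, hiR, -, -, h1, h2⟩
    obtain ⟨k, hk⟩ := hie
    have hire : Even (i + 2 * d) := ⟨k + d, by omega⟩
    have hli : lmin ≤ i := hlminLB ⟨hiL, ⟨k, hk⟩⟩
    have hri : rmin ≤ i + 2 * d := hrminLB ⟨hiR, hire⟩
    have hui : i ≤ lmax := hlmaxUB ⟨hiL, ⟨k, hk⟩⟩
    have huri : i + 2 * d ≤ rmax := hrmaxUB ⟨hiR, hire⟩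
    refine ⟨i + d, by omega, by omega, ?_⟩
    rw [← h1]
    exact hSL i hiL ⟨k, hk⟩
  · rintro ⟨m, hm1, hm2, hm0⟩
    have hlr : lmax < rmin := hLR lmax hlmaxL rmin hrminR
    have hs1 : lmin + rmin ≤ 2 * m := by omega
    have hs2 : 2 * m ≤ lmax + rmax := by omega
    set i := max lmin (2 * m - rmax) with hidef
    have hie : Even i := by
      rcases max_cases lmin (2 * m - rmax) with ⟨h, -⟩ | ⟨h, -⟩
      · rw [hidef, h]; exact ⟨a, ha⟩
      · rw [hidef, h]; exact ⟨m - e, by omega⟩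
    have hile : lmin ≤ i := le_max_left _ _
    have hiub : i ≤ lmax := by
      apply max_le (hlminLB ⟨hlmaxL, ⟨c, hc⟩⟩); omega
    have hiL : i ∈ Set.Icc la lb := Set.mem_Icc.mpr ⟨le_trans hlminL.1 hile, le_trans hiub hlmaxL.2⟩
    have hrr : rmin ≤ rmax := hrmaxUB ⟨hrminR, ⟨b, hb⟩⟩
    have hi2 : i ≤ 2 * m - rmin := max_le (by omega) (by omega)
    have hi3 : 2 * m - rmax ≤ i := le_max_right _ _
    have him : i ≤ m := by omega
    set r := 2 * m - i with hrdef
    have hre : Even r := by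
      obtain ⟨k, hk⟩ := hie
      exact ⟨m - k, by omega⟩
    have hrlb : rmin ≤ r := by omega
    have hrub : r ≤ rmax := by omega
    have hrR : r ∈ Set.Icc ra rb := Set.mem_Icc.mpr ⟨le_trans hrminR.1 hrlb, le_trans hrub hrmaxR.2⟩
    have hir : i < r := hLR i hiL r hrR
    refine ⟨i, m - i, by omega, hie, hiL, ?_, ?_, ?_, ?_, ?_⟩
    · have : i + 2 * (m - i) = r := by omega
      rw [this]; exact hrR
    · exact (hL hiL).1
    · have : i + 2 * (m - i) = r := by omega
      rw [this]; exact (hR hrR).2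
    · have h1 : S i = false := hSL i hiL hie
      have h2 : i + (m - i) = m := by omega
      rw [h1, h2, hm0]
    · have h2 : i + (m - i) = m := by omega
      have h3 : i + 2 * (m - i) = r := by omega
      rw [h2, h3, hm0, hSR r hrR hre]
end

section
/- Let S be a binary string of length n and let L, R ⊆ {1,…,n} be intervals of consecutive integers such that every element of L is strictly smaller than every element of R, L_even is nonempty and S[l] = 0 for every l ∈ L_even. Set l_min = min L_even and l_max = max L_even. Let r₀ ∈ R_even with S[r₀] = 0. Then S has an even L-R-3-cadence whose last index i+2d equals r₀ if and only if there exists an index m with (l_min + r₀)/2 ≤ m ≤ (l_max + r₀)/2 and S[m] = 0. -/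
/-- first half of Lemma `LR0`.  Let `S` be a binary string of
length `n`, `L = [la,lb]` and `R = [ra,rb]` intervals inside `{1,…,n}` with all
of `L` below all of `R`, and suppose all even positions of `L` carry a `0`.
With `l_min, l_max` the extremal even elements of `L` and `r₀` an even element
of `R` with `S[r₀] = 0`, the string `S` has an even `L`-`R`-3-cadence ending
at `r₀` iff some `m` with `(l_min+r₀)/2 ≤ m ≤ (l_max+r₀)/2` has `S[m] = 0`. -/
theorem stmt_5 (n la lb ra rb : ℕ) (S : ℕ → Bool)
    (hL : Set.Icc la lb ⊆ Set.Icc 1 n) (hR : Set.Icc ra rb ⊆ Set.Icc 1 n)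
    (hLR : ∀ l ∈ Set.Icc la lb, ∀ r ∈ Set.Icc ra rb, l < r)
    (hSL : ∀ l ∈ Set.Icc la lb, Even l → S l = false)
    (lmin lmax : ℕ)
    (hlmin : IsLeast {x | x ∈ Set.Icc la lb ∧ Even x} lmin)
    (hlmax : IsGreatest {x | x ∈ Set.Icc la lb ∧ Even x} lmax)
    (r0 : ℕ) (hr0R : r0 ∈ Set.Icc ra rb) (hr0e : Even r0) (hr0S : S r0 = false) :
    (∃ i d : ℕ, 0 < d ∧ Even i ∧ i ∈ Set.Icc la lb ∧ i + 2 * d ∈ Set.Icc ra rb ∧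
       i + 2 * d = r0 ∧ 1 ≤ i ∧ i + 2 * d ≤ n ∧
       S i = S (i + d) ∧ S (i + d) = S (i + 2 * d)) ↔
    (∃ m, (lmin + r0) / 2 ≤ m ∧ m ≤ (lmax + r0) / 2 ∧ S m = false) := by
  obtain ⟨⟨hlminL, a, ha⟩, hminle⟩ := hlmin
  obtain ⟨⟨hlmaxL, b, hb⟩, hmaxge⟩ := hlmax
  obtain ⟨c, hc⟩ := hr0e
  constructor
  · rintro ⟨i, d, hd, hie, hiL, hiR, hir, _, _, h1, h2⟩
    obtain ⟨j, hj⟩ := hie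
    refine ⟨i + d, ?_, ?_, ?_⟩
    · have := hminle ⟨hiL, ⟨j, hj⟩⟩; omega
    · have := hmaxge ⟨hiL, ⟨j, hj⟩⟩; omega
    · rw [← h1]; exact hSL i hiL ⟨j, hj⟩
  · rintro ⟨m, hm1, hm2, hmS⟩
    have hlminlt : lmin < r0 := hLR lmin hlminL r0 hr0R
    have hlmaxlt : lmax < r0 := hLR lmax hlmaxL r0 hr0R
    have hm1' : lmin + r0 ≤ 2 * m := by omega
    have hm2' : 2 * m ≤ lmax + r0 := by omega
    have hlmin1 : 1 ≤ lmin := (hL hlminL).1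
    refine ⟨2 * m - r0, r0 - m, by omega, ⟨m - c, by omega⟩, ?_, ?_, by omega, by omega,
      ?_, ?_, ?_⟩
    · have h1 := hlminL; have h2 := hlmaxL
      simp only [Set.mem_Icc] at h1 h2 ⊢
      omega
    · have : 2 * m - r0 + 2 * (r0 - m) = r0 := by omega
      rw [this]; exact hr0R
    · have := (hR hr0R).2; omega
    · have h1 := hlminL; have h2 := hlmaxL
      simp only [Set.mem_Icc] at h1 h2
      have hi : S (2 * m - r0) = false :=
        hSL _ (by simp only [Set.mem_Icc]; omega) ⟨m - c, by omega⟩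
      have : 2 * m - r0 + (r0 - m) = m := by omega
      rw [this, hi, hmS]
    · have h3 : 2 * m - r0 + (r0 - m) = m := by omega
      have h4 : 2 * m - r0 + 2 * (r0 - m) = r0 := by omega
      rw [h3, h4, hmS, hr0S]
end

section
/- Let S be a binary string of length n and let L, R ⊆ {1,…,n} be intervals of consecutive integers such that every element of L is strictly smaller than every element of R, L_even and R_even are nonempty, and S[l] = 0 for every l ∈ L_even. Set l_min = min L_even, l_max = max L_even, r_min = min R_even and r_max = max R_even. Let m₀ be an index with (l_min + r_min)/2 ≤ m₀ ≤ (l_max + r_max)/2 and S[m₀] = 0. Then S has an even L-R-3-cadence whose middle index i+d equals m₀ if and only if there exists an even index r with max(2m₀ − l_max, r_min) ≤ r ≤ min(2m₀ − l_min, r_max) and S[r] = 0. -/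
/-- second half of Lemma `LR0`.  Let `S` be a binary string of
length `n`, `L = [la,lb]` and `R = [ra,rb]` intervals inside `{1,…,n}` with all
of `L` below all of `R`, and suppose all even positions of `L` carry a `0`.
With `l_min, l_max, r_min, r_max` the extremal even elements and `m₀` an index
with `(l_min+r_min)/2 ≤ m₀ ≤ (l_max+r_max)/2` and `S[m₀] = 0`, the string `S`
has an even `L`-`R`-3-cadence whose middle index equals `m₀` iff there is an
even `r` with `max (2m₀−l_max) r_min ≤ r ≤ min (2m₀−l_min) r_max` and
`S[r] = 0`. -/
theorem stmt_6 (n la lb ra rb : ℕ) (S : ℕ → Bool)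
    (hL : Set.Icc la lb ⊆ Set.Icc 1 n) (hR : Set.Icc ra rb ⊆ Set.Icc 1 n)
    (hLR : ∀ l ∈ Set.Icc la lb, ∀ r ∈ Set.Icc ra rb, l < r)
    (hSL : ∀ l ∈ Set.Icc la lb, Even l → S l = false)
    (lmin lmax rmin rmax : ℕ)
    (hlmin : IsLeast {x | x ∈ Set.Icc la lb ∧ Even x} lmin)
    (hlmax : IsGreatest {x | x ∈ Set.Icc la lb ∧ Even x} lmax)
    (hrmin : IsLeast {x | x ∈ Set.Icc ra rb ∧ Even x} rmin)
    (hrmax : IsGreatest {x | x ∈ Set.Icc ra rb ∧ Even x} rmax)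
    (m0 : ℕ) (hm0l : (lmin + rmin) / 2 ≤ m0) (hm0r : m0 ≤ (lmax + rmax) / 2)
    (hm0S : S m0 = false) :
    (∃ i d : ℕ, 0 < d ∧ Even i ∧ i ∈ Set.Icc la lb ∧ i + 2 * d ∈ Set.Icc ra rb ∧
       i + d = m0 ∧ 1 ≤ i ∧ i + 2 * d ≤ n ∧
       S i = S (i + d) ∧ S (i + d) = S (i + 2 * d)) ↔
    (∃ r, Even r ∧ max (2 * m0 - lmax) rmin ≤ r ∧ r ≤ min (2 * m0 - lmin) rmax ∧
       S r = false) := by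
  obtain ⟨⟨hlminL, hlminE⟩, hlminLe⟩ := hlmin
  obtain ⟨⟨hlmaxL, hlmaxE⟩, hlmaxGe⟩ := hlmax
  obtain ⟨⟨hrminR, hrminE⟩, hrminLe⟩ := hrmin
  obtain ⟨⟨hrmaxR, hrmaxE⟩, hrmaxGe⟩ := hrmax
  obtain ⟨a1, ha1⟩ := hlminE
  obtain ⟨a2, ha2⟩ := hlmaxE
  obtain ⟨b1, hb1⟩ := hrminE
  obtain ⟨b2, hb2⟩ := hrmaxE
  constructor
  · rintro ⟨i, d, hd, hiE, hiL, hrR, hm, h1, hn, hS1, hS2⟩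
    refine ⟨i + 2 * d, hiE.add (even_two_mul d), ?_, ?_, ?_⟩
    · have h1 := hrminLe ⟨hrR, hiE.add (even_two_mul d)⟩
      have h2 := hlmaxGe ⟨hiL, hiE⟩
      omega
    · have h1 := hrmaxGe ⟨hrR, hiE.add (even_two_mul d)⟩
      have h2 := hlminLe ⟨hiL, hiE⟩
      omega
    · have := hSL i hiL hiE
      rw [← hS2, ← hS1, this]
  · rintro ⟨r, hrE, hr1, hr2, hrS⟩
    obtain ⟨b, hb⟩ := hrE
    have hsum : lmin + rmin ≤ 2 * m0 := by omega
    have hrR : r ∈ Set.Icc ra rb := by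
      simp only [Set.mem_Icc] at hlminL hlmaxL hrminR hrmaxR ⊢
      omega
    have hiLm : lmin ≤ 2 * m0 - r ∧ 2 * m0 - r ≤ lmax := by omega
    have hiL : 2 * m0 - r ∈ Set.Icc la lb := by
      simp only [Set.mem_Icc] at hlminL hlmaxL ⊢
      omega
    have hlt : 2 * m0 - r < r := hLR _ hiL _ hrR
    refine ⟨2 * m0 - r, r - m0, by omega, ⟨m0 - b, by omega⟩, hiL, ?_, by omega,
      (hL hiL).1, ?_, ?_, ?_⟩
    · have : 2 * m0 - r + 2 * (r - m0) = r := by omega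
      rw [this]; exact hrR
    · have : 2 * m0 - r + 2 * (r - m0) = r := by omega
      rw [this]; exact (hR hrR).2
    · have h1 : 2 * m0 - r + (r - m0) = m0 := by omega
      have h2 := hSL _ hiL ⟨m0 - b, by omega⟩
      rw [h1, h2, hm0S]
    · have h1 : 2 * m0 - r + (r - m0) = m0 := by omega
      have h2 : 2 * m0 - r + 2 * (r - m0) = r := by omega
      rw [h1, h2, hm0S, hrS]
end

section
/- Let S be a binary string of length n and let L, R ⊆ {1,…,n} be intervals of consecutive integers such that every element of L is strictly smaller than every element of R, L_even and R_even are nonempty, and S[l] = 0 for every l ∈ L_even. Set l_min = min L_even, l_max = max L_even, r_min = min R_even and r_max = max R_even. Suppose some r ∈ R_even satisfies S[r] = 0 and let r₀ be the least such element. Suppose S[m] = 1 for every index m with (l_min + r₀)/2 ≤ m ≤ (l_max + r₀)/2. Suppose some index m with (l_max + r₀)/2 < m ≤ (l_max + r_max)/2 satisfies S[m] = 0, and let m₀ be the least such index. Suppose S[r] = 1 for every even index r with 2m₀ − l_max ≤ r ≤ min(2m₀ − l_min, r_max). Then, setting R' = {x ∈ R : x > 2m₀ − l_min}, the string S has an even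 L-R-3-cadence if and only if S has an even L-R'-3-cadence. -/
/-- Corollary `LRalgo`, final step.  Under the hypotheses of
the `L`-`R`-3-cadence algorithm — `S[L_even] = 0^i`, `r₀` the least even
position of `R` with a `0`, no `0` in `S` between `(l_min+r₀)/2` and
`(l_max+r₀)/2`, `m₀` the least position in `((l_max+r₀)/2, (l_max+r_max)/2]`
with a `0`, and no even `0`-position in `[2m₀−l_max, min (2m₀−l_min) r_max]` —
the string `S` has an even `L`-`R`-3-cadence iff it has an even
`L`-`R'`-3-cadence for `R' = {x ∈ R : x > 2m₀ − l_min}`. -/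
theorem stmt_7 (n la lb ra rb : ℕ) (S : ℕ → Bool)
    (hL : Set.Icc la lb ⊆ Set.Icc 1 n) (hR : Set.Icc ra rb ⊆ Set.Icc 1 n)
    (hLR : ∀ l ∈ Set.Icc la lb, ∀ r ∈ Set.Icc ra rb, l < r)
    (hSL : ∀ l ∈ Set.Icc la lb, Even l → S l = false)
    (lmin lmax rmin rmax : ℕ)
    (hlmin : IsLeast {x | x ∈ Set.Icc la lb ∧ Even x} lmin)
    (hlmax : IsGreatest {x | x ∈ Set.Icc la lb ∧ Even x} lmax)
    (hrmin : IsLeast {x | x ∈ Set.Icc ra rb ∧ Even x} rmin)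
    (hrmax : IsGreatest {x | x ∈ Set.Icc ra rb ∧ Even x} rmax)
    (r0 : ℕ)
    (hr0 : IsLeast {r | r ∈ Set.Icc ra rb ∧ Even r ∧ S r = false} r0)
    (hgap1 : ∀ m, (lmin + r0) / 2 ≤ m → m ≤ (lmax + r0) / 2 → S m = true)
    (m0 : ℕ)
    (hm0 : IsLeast {m | (lmax + r0) / 2 < m ∧ m ≤ (lmax + rmax) / 2 ∧
        S m = false} m0)
    (hgap2 : ∀ r, Even r → 2 * m0 - lmax ≤ r → r ≤ min (2 * m0 - lmin) rmax →
        S r = true) :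
    (∃ i d : ℕ, 0 < d ∧ Even i ∧ i ∈ Set.Icc la lb ∧ i + 2 * d ∈ Set.Icc ra rb ∧
       1 ≤ i ∧ i + 2 * d ≤ n ∧ S i = S (i + d) ∧ S (i + d) = S (i + 2 * d)) ↔
    (∃ i d : ℕ, 0 < d ∧ Even i ∧ i ∈ Set.Icc la lb ∧ i + 2 * d ∈ Set.Icc ra rb ∧
       2 * m0 - lmin < i + 2 * d ∧
       1 ≤ i ∧ i + 2 * d ≤ n ∧ S i = S (i + d) ∧ S (i + d) = S (i + 2 * d)) := by

  constructor
  · rintro ⟨i, d, hd, hei, hiL, hrR, h1, h2, hS1, hS2⟩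
    refine ⟨i, d, hd, hei, hiL, hrR, ?_, h1, h2, hS1, hS2⟩
    by_contra hcon
    push_neg at hcon
    have hSi : S i = false := hSL i hiL hei
    have hSm : S (i + d) = false := by rw [← hS1, hSi]
    have hSr : S (i + 2 * d) = false := by rw [← hS2, ← hS1, hSi]
    have hli : lmin ≤ i := hlmin.2 ⟨hiL, hei⟩
    have hui : i ≤ lmax := hlmax.2 ⟨hiL, hei⟩
    obtain ⟨k, hk⟩ := hei
    have her : Even (i + 2 * d) := ⟨k + d, by omega⟩
    have hr0le : r0 ≤ i + 2 * d := hr0.2 ⟨hrR, her, hSr⟩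
    have hrle : i + 2 * d ≤ rmax := hrmax.2 ⟨hrR, her⟩
    obtain ⟨a, ha⟩ := hlmin.1.2
    obtain ⟨b, hb⟩ := hlmax.1.2
    obtain ⟨c, hc⟩ := hr0.1.2.1
    obtain ⟨e, he⟩ := hrmax.1.2
    have hmlow : (lmin + r0) / 2 ≤ i + d := by omega
    have hmhigh : ¬ (i + d ≤ (lmax + r0) / 2) := by
      intro h
      have := hgap1 (i + d) hmlow h
      rw [hSm] at this
      exact Bool.false_ne_true this
    have hm0le : m0 ≤ i + d := hm0.2 ⟨by omega, by omega, hSm⟩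
    have := hgap2 (i + 2 * d) her (by omega) (by omega)
    rw [hSr] at this
    exact Bool.false_ne_true this
  · rintro ⟨i, d, hd, hei, hiL, hrR, _, h1, h2, hS1, hS2⟩
    exact ⟨i, d, hd, hei, hiL, hrR, h1, h2, hS1, hS2⟩
end

section
/- Let S be a binary string of length n with S[2] = 0, let L = {1,…,⌊n/3⌋} and R = {⌊2n/3⌋+1,…,n}, and let i ≥ 1 be maximal such that 2i ≤ ⌊n/3⌋ and S[2] = S[4] = ⋯ = S[2i] = 0; set l_min = 2 and l_max = 2i. Let r₀ be an even index with ⌊2n/3⌋+1 ≤ r₀ ≤ n and S[r₀] = 0, and set l'_max = min( l_max, 2⌊r₀/6⌋, 2(⌈(3r₀−2n)/2⌉ − 1) ). Then S has an even 3-cadence whose last index i'+2d equals r₀ and whose first index i' lies in {2,4,…,2i} if and only if there exists an index m with (l_min + r₀)/2 ≤ m ≤ (l'_max + r₀)/2 and S[m] = 0. -/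
/-- first half of Lemma 9 of the paper.  `S` is a binary
string of length `n` with `S[2] = 0`; `i ≥ 1` is maximal with `2i ≤ ⌊n/3⌋` and
`S[2] = S[4] = ⋯ = S[2i] = 0`; `r₀` is an even index in
`R = {⌊2n/3⌋+1,…,n}` with `S[r₀] = 0`, and
`l'_max = min(l_max, 2⌊r₀/6⌋, 2(⌈(3r₀−2n)/2⌉−1))` (note
`⌈(3r₀−2n)/2⌉ = (3r₀−2n+1)/2` here since `3r₀ > 2n`).  Then `S` has an even
3-cadence ending at `r₀` and starting in `{2,4,…,2i}` iff some index `m` with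
`(l_min+r₀)/2 ≤ m ≤ (l'_max+r₀)/2` has `S[m] = 0`. -/
theorem stmt_8 (n : ℕ) (S : ℕ → Bool) (hS2 : S 2 = false)
    (i : ℕ) (hi1 : 1 ≤ i) (hi2 : 2 * i ≤ n / 3)
    (hrun : ∀ l, 1 ≤ l → l ≤ i → S (2 * l) = false)
    (himax : ¬ (2 * (i + 1) ≤ n / 3 ∧ S (2 * (i + 1)) = false))
    (r0 : ℕ) (hr0e : Even r0) (hr0l : 2 * n / 3 + 1 ≤ r0) (hr0r : r0 ≤ n)
    (hr0S : S r0 = false) :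
    (∃ i' d : ℕ, 0 < d ∧ Even i' ∧ (∃ l, 1 ≤ l ∧ l ≤ i ∧ i' = 2 * l) ∧
       i' + 2 * d = r0 ∧ 1 ≤ i' ∧ i' + 2 * d ≤ n ∧ i' ≤ d ∧ n < i' + 3 * d ∧
       S i' = S (i' + d) ∧ S (i' + d) = S (i' + 2 * d)) ↔
    (∃ m, (2 + r0) / 2 ≤ m ∧
       m ≤ (min (2 * i) (min (2 * (r0 / 6)) (2 * ((3 * r0 - 2 * n + 1) / 2 - 1)))
             + r0) / 2 ∧
       S m = false) := by
  obtain ⟨k, hk⟩ := hr0e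
  constructor
  · rintro ⟨i', d, hd, hie, ⟨l, hl1, hl2, hil⟩, hsum, hi'1, hle, hid, hn3, h1, h2⟩
    have hSi' : S i' = false := by rw [hil]; exact hrun l hl1 hl2
    refine ⟨i' + d, ?_, ?_, ?_⟩
    · omega
    · omega
    · rw [← h1, hSi']
  · rintro ⟨m, hm1, hm2, hmS⟩
    have h3r : 2 * n + 2 ≤ 3 * r0 := by omega
    have hmr : m < r0 := by omega
    have h2m : r0 ≤ 2 * m := by omega
    have e1 : 2 * m - r0 + (r0 - m) = m := by omega
    have e2 : 2 * m - r0 + 2 * (r0 - m) = r0 := by omega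
    refine ⟨2 * m - r0, r0 - m, by omega, ⟨m - r0 / 2, by omega⟩,
      ⟨m - r0 / 2, by omega, by omega, by omega⟩, by omega, by omega, by omega,
      by omega, by omega, ?_, ?_⟩
    · have : S (2 * m - r0) = false := by
        have := hrun (m - r0 / 2) (by omega) (by omega)
        have e3 : 2 * (m - r0 / 2) = 2 * m - r0 := by omega
        rwa [e3] at this
      rw [this, e1, hmS]
    · rw [e1, e2, hmS, hr0S]
end

section
/- Let S be a binary string of length n with S[2] = 0, let L = {1,…,⌊n/3⌋} and R = {⌊2n/3⌋+1,…,n}, and let i ≥ 1 be maximal such that 2i ≤ ⌊n/3⌋ and S[2] = S[4] = ⋯ = S[2i] = 0; set l_min = 2 and l_max = 2i. Let r_min and r_max be the smallest and largest even elements of R, and let m₀ be an index with (l_min + r_min)/2 ≤ m₀ ≤ (l_max + r_max)/2 and S[m₀] = 0. Set l''_min = max( l_min, 2(m₀ − ⌊n/2⌋) ) and l''_max = min( l_max, 2⌊m₀/4⌋, 2(⌈(3m₀−n)/4⌉ − 1) ). Then S has an even 3-cadence whose middle index i'+d equals m₀ and whose first index i' lies in {2,4,…,2i} if and only if there exists an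 even index r with 2m₀ − l''_max ≤ r ≤ 2m₀ − l''_min and S[r] = 0. -/
/-- second half of Lemma 9 of the paper.  `S` is a binary
string of length `n` with `S[2] = 0`; `i ≥ 1` is maximal with `2i ≤ ⌊n/3⌋` and
`S[2] = S[4] = ⋯ = S[2i] = 0`; `r_min`/`r_max` are the least/greatest even
elements of `R = {⌊2n/3⌋+1,…,n}`; `m₀` satisfies
`(l_min+r_min)/2 ≤ m₀ ≤ (l_max+r_max)/2` and `S[m₀] = 0`;
`l''_min = max(l_min, 2(m₀−⌊n/2⌋))` and
`l''_max = min(l_max, 2⌊m₀/4⌋, 2(⌈(3m₀−n)/4⌉−1))` (note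
`⌈(3m₀−n)/4⌉ = (3m₀−n+3)/4` here since `3m₀ > n`).  Then `S` has an even
3-cadence with middle index `m₀` starting in `{2,4,…,2i}` iff some even `r`
with `2m₀−l''_max ≤ r ≤ 2m₀−l''_min` has `S[r] = 0`. -/
theorem stmt_9 (n : ℕ) (S : ℕ → Bool) (hS2 : S 2 = false)
    (i : ℕ) (hi1 : 1 ≤ i) (hi2 : 2 * i ≤ n / 3)
    (hrun : ∀ l, 1 ≤ l → l ≤ i → S (2 * l) = false)
    (himax : ¬ (2 * (i + 1) ≤ n / 3 ∧ S (2 * (i + 1)) = false))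
    (rmin rmax : ℕ)
    (hrmin : IsLeast {r | Even r ∧ 2 * n / 3 + 1 ≤ r ∧ r ≤ n} rmin)
    (hrmax : IsGreatest {r | Even r ∧ 2 * n / 3 + 1 ≤ r ∧ r ≤ n} rmax)
    (m0 : ℕ) (hm0l : (2 + rmin) / 2 ≤ m0) (hm0r : m0 ≤ (2 * i + rmax) / 2)
    (hm0S : S m0 = false) :
    (∃ i' d : ℕ, 0 < d ∧ Even i' ∧ (∃ l, 1 ≤ l ∧ l ≤ i ∧ i' = 2 * l) ∧
       i' + d = m0 ∧ 1 ≤ i' ∧ i' + 2 * d ≤ n ∧ i' ≤ d ∧ n < i' + 3 * d ∧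
       S i' = S (i' + d) ∧ S (i' + d) = S (i' + 2 * d)) ↔
    (∃ r, Even r ∧
       2 * m0 - min (2 * i) (min (2 * (m0 / 4)) (2 * ((3 * m0 - n + 3) / 4 - 1)))
         ≤ r ∧
       r ≤ 2 * m0 - max 2 (2 * (m0 - n / 2)) ∧
       S r = false) := by
  obtain ⟨⟨hrme, hrm1, hrm2⟩, -⟩ := hrmin
  rw [Nat.even_iff] at hrme
  constructor
  · rintro ⟨i', d, hd, hie, ⟨l, hl1, hl2, hil⟩, hm, h1le, h2n, hid, hn3, hSa, hSb⟩
    rw [Nat.even_iff] at hie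
    refine ⟨i' + 2 * d, ?_, ?_, ?_, ?_⟩
    · rw [Nat.even_iff]; omega
    · omega
    · omega
    · rw [← hSb, hm, hm0S]
  · rintro ⟨r, hre, hrl, hrr, hSr⟩
    rw [Nat.even_iff] at hre
    have hi'eq : 2 * m0 - r = 2 * (m0 - r / 2) := by omega
    have hSl : S (2 * m0 - r) = false := by
      rw [hi'eq]; exact hrun _ (by omega) (by omega)
    have h1 : (2 * m0 - r) + (r - m0) = m0 := by omega
    have h2 : (2 * m0 - r) + 2 * (r - m0) = r := by omega
    refine ⟨2 * m0 - r, r - m0, by omega, ?_, ⟨m0 - r / 2, by omega, by omega, by omega⟩,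
      h1, by omega, by omega, by omega, by omega, ?_, ?_⟩
    · rw [Nat.even_iff]; omega
    · rw [h1, hSl, hm0S]
    · rw [h1, h2, hm0S, hSr]
end

section
/- Let n ≥ 1 and k ≥ 1 be integers and let i, d be integers satisfying d > 0, 1 ≤ i, i − d ≤ 0, i + (k−1)d ≤ n and i + kd > n (i.e., (i,d) satisfies the positional constraints of a k-cadence in a string of length n). Then for every integer j with 0 ≤ j < k, the inequalities j·n < k·(i + jd) ≤ (j+1)·n hold; in other words, the (j+1)-th element i+jd of the arithmetic progression lies in the interval (j·n/k, (j+1)·n/k]. -/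
/-- If `(i,d)` satisfies the positional constraints of a
`k`-cadence in a string of length `n` (namely `d > 0`, `1 ≤ i`, `i − d ≤ 0`,
`i + (k−1)d ≤ n`, `i + kd > n`), then for each `0 ≤ j < k` the `(j+1)`-th
element `i + jd` lies in the interval `(jn/k, (j+1)n/k]`, i.e.
`j·n < k·(i+jd) ≤ (j+1)·n`. -/
theorem stmt_10 (n k i d j : ℤ) (hn : 1 ≤ n) (hk : 1 ≤ k)
    (hd : 0 < d) (hi : 1 ≤ i)
    (hleft : i - d ≤ 0) (hin : i + (k - 1) * d ≤ n) (hright : n < i + k * d)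
    (hj0 : 0 ≤ j) (hjk : j < k) :
    j * n < k * (i + j * d) ∧ k * (i + j * d) ≤ (j + 1) * n := by
  constructor
  · nlinarith [mul_le_mul_of_nonneg_left (show n ≤ i + k * d - 1 by linarith) hj0,
      mul_pos (show (0:ℤ) < k - j by linarith) (show (0:ℤ) < i by linarith)]
  · nlinarith [mul_le_mul_of_nonneg_left hin (show (0:ℤ) ≤ j + 1 by linarith),
      mul_nonpos_of_nonneg_of_nonpos (show (0:ℤ) ≤ k - j - 1 by linarith) hleft]
end

section
/- Let k ≥ 3 and p ≥ 1 be integers, and let P and P'' be binary strings of length p. Let S be the binary string of length n = k(2kp+1) given by the concatenation S = 0^{(k−1)p} · P · 0 · 0^{kp} · 0^{kp} · 1 · 0^{kp} · 0^{kp} · 0 · P'' · 0^{(k−1)p} · (1^{2kp+1})^{k−3}. Then S has a k-cadence with character 1 if and only if there exists an index l with 1 ≤ l ≤ p, P[l] = 1 and P''[p+1−l] = 1. -/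
set_option maxHeartbeats 1000000 in
/-- Let `k ≥ 3`, `p ≥ 1`, let `P, P''` be binary strings of
length `p`, and let `S` be the binary string of length `n = k(2kp+1)`
`S = 0^{(k−1)p}·P·0·0^{kp} | 0^{kp}·1·0^{kp} | 0^{kp}·0·P''·0^{(k−1)p} | (1^{2kp+1})^{k−3}`
(described segment by segment below).  Then `S` has a `k`-cadence with
character `1` iff there is an `l` with `1 ≤ l ≤ p`, `P[l] = 1` and
`P''[p+1−l] = 1`. -/
theorem stmt_11 (k p n : ℕ) (hk : 3 ≤ k) (hp : 1 ≤ p)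
    (hn : n = k * (2 * k * p + 1))
    (P P'' S : ℕ → Bool)
    (h1 : ∀ m, 1 ≤ m → m ≤ (k - 1) * p → S m = false)
    (h2 : ∀ l, 1 ≤ l → l ≤ p → S ((k - 1) * p + l) = P l)
    (h3 : ∀ m, k * p + 1 ≤ m → m ≤ 3 * k * p + 1 → S m = false)
    (h4 : S (3 * k * p + 2) = true)
    (h5 : ∀ m, 3 * k * p + 3 ≤ m → m ≤ 5 * k * p + 3 → S m = false)
    (h6 : ∀ l, 1 ≤ l → l ≤ p → S (5 * k * p + 3 + l) = P'' l)
    (h7 : ∀ m, 5 * k * p + 3 + p + 1 ≤ m → m ≤ 6 * k * p + 3 → S m = false)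
    (h8 : ∀ m, 6 * k * p + 4 ≤ m → m ≤ n → S m = true) :
    (∃ i d : ℕ, 0 < d ∧ 1 ≤ i ∧ i + (k - 1) * d ≤ n ∧
       (∀ j, j < k → S (i + j * d) = S i) ∧ i ≤ d ∧ n < i + k * d ∧
       S i = true) ↔
    (∃ l, 1 ≤ l ∧ l ≤ p ∧ P l = true ∧ P'' (p + 1 - l) = true) := by
  obtain ⟨k', rfl⟩ : ∃ k', k = k' + 3 := ⟨k - 3, by omega⟩
  subst hn
  have hk1 : k' + 3 - 1 = k' + 2 := by omega
  simp only [hk1] at *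
  constructor
  · rintro ⟨i, d, hd, hi1, hle, hall, hid, hlt, hSi⟩
    have hSall : ∀ j, j < k' + 3 → S (i + j * d) = true := fun j hj => (hall j hj).trans hSi
    have hki : (k' + 3) * i ≤ (k' + 3) * (2 * (k' + 3) * p + 1) := by
      have hmul : (k' + 2) * i ≤ (k' + 2) * d := Nat.mul_le_mul le_rfl hid
      linarith [hle, hmul]
    have hi_ub : i ≤ 2 * (k' + 3) * p + 1 := Nat.le_of_mul_le_mul_left hki (by omega)
    have hi_lb : (k' + 2) * p + 1 ≤ i := by
      by_contra h
      push_neg at h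
      have hf := h1 i hi1 (Nat.lt_succ_iff.mp h)
      rw [hSi] at hf; cases hf
    have hi_ub2 : i ≤ (k' + 3) * p := by
      by_contra h
      push_neg at h
      have hf := h3 i h (by linarith [hi_ub, Nat.zero_le (k' * p), hp])
      rw [hSi] at hf; cases hf
    obtain ⟨l, hl1, hlp, hl⟩ : ∃ l, 1 ≤ l ∧ l ≤ p ∧ i = (k' + 2) * p + l := by
      have hABp : (k' + 2) * p + p = (k' + 3) * p := by ring
      obtain ⟨B, hB⟩ : ∃ B, (k' + 2) * p = B := ⟨_, rfl⟩
      rw [hB] at hi_lb hABp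
      rw [← hABp] at hi_ub2
      exact ⟨i - B, by omega, by omega, by omega⟩
    have hpd : (k' + 3) * (2 * (k' + 3) * p + 1) < (k' + 3) * (p + d) := by
      linarith [hlt, hi_ub2]
    have hpd' : 2 * (k' + 3) * p + 1 < p + d := Nat.lt_of_mul_lt_mul_left hpd
    have hd_ub : (k' + 2) * d < (k' + 2) * (4 * (k' + 3) * p + 3) := by
      linarith [hle, hi_lb, hp, Nat.zero_le (k' * k' * p), Nat.zero_le (k' * p)]
    have hd_ub' : d < 4 * (k' + 3) * p + 3 := Nat.lt_of_mul_lt_mul_left hd_ub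
    have hx := hSall 1 (by omega)
    have hxe : i + 1 * d = 3 * (k' + 3) * p + 2 := by
      rcases Nat.lt_trichotomy (i + 1 * d) (3 * (k' + 3) * p + 2) with hc | hc | hc
      · have hf := h3 (i + 1 * d)
          (by linarith [hpd', hi_lb, hp, Nat.zero_le (k' * p)])
          (Nat.lt_succ_iff.mp hc)
        rw [hx] at hf; cases hf
      · exact hc
      · have hf := h5 (i + 1 * d) hc
          (by linarith [hi_ub2, hd_ub'])
        rw [hx] at hf; cases hf
    have hy := hSall 2 (by omega)
    obtain ⟨l', hll'⟩ : ∃ l', l + l' = p + 1 := ⟨p + 1 - l, by omega⟩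
    have hBA : (k' + 2) * p + p = (k' + 3) * p := by ring
    have hye : i + 2 * d = 5 * (k' + 3) * p + 3 + l' := by
      linarith [hxe, hll', hBA, hl]
    have hf := h6 l' (by omega) (by omega)
    rw [← hye] at hf
    rw [hy] at hf
    have hPl : P l = true := by
      have := h2 l hl1 hlp
      rw [← hl, hSi] at this
      exact this.symm
    refine ⟨l, hl1, hlp, hPl, ?_⟩
    have : p + 1 - l = l' := by omega
    rw [this]
    exact hf.symm
  · rintro ⟨l, hl1, hlp, hPl, hPp⟩
    obtain ⟨m, hm⟩ : ∃ m, l + m = p := ⟨p - l, by omega⟩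
    have hSi : S ((k' + 2) * p + l) = true := by rw [h2 l hl1 hlp]; exact hPl
    have hub : (k' + 2) * p + l + (k' + 2) * (2 * ((k' + 3) * p) + 2 + m)
        ≤ (k' + 3) * (2 * (k' + 3) * p + 1) := by
      linarith [Nat.mul_le_mul (le_refl k') (show m + 1 ≤ p by omega), hm, hlp,
        Nat.zero_le (k' * p), hp]
    refine ⟨(k' + 2) * p + l, 2 * ((k' + 3) * p) + 2 + m, by positivity,
      le_trans hl1 (Nat.le_add_left l _), hub, ?_, ?_, ?_, hSi⟩
    · intro j hj
      rw [hSi]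
      rcases j with _ | _ | _ | j
      · simpa using hSi
      · have e : (k' + 2) * p + l + 1 * (2 * ((k' + 3) * p) + 2 + m)
            = 3 * (k' + 3) * p + 2 := by linarith [hm]
        show S ((k' + 2) * p + l + 1 * (2 * ((k' + 3) * p) + 2 + m)) = true
        rw [e]
        exact h4
      · have e : (k' + 2) * p + l + 2 * (2 * ((k' + 3) * p) + 2 + m)
            = 5 * (k' + 3) * p + 3 + (m + 1) := by linarith [hm]
        show S ((k' + 2) * p + l + 2 * (2 * ((k' + 3) * p) + 2 + m)) = true
        rw [e, h6 (m + 1) (by omega) (by omega)]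
        have em : p + 1 - l = m + 1 := by omega
        rw [em] at hPp
        exact hPp
      · show S ((k' + 2) * p + l + (j + 3) * (2 * ((k' + 3) * p) + 2 + m)) = true
        apply h8
        · linarith [Nat.mul_le_mul (show 3 ≤ j + 3 by omega)
            (le_refl (2 * ((k' + 3) * p) + 2 + m)), Nat.zero_le (k' * p), hp,
            Nat.zero_le m, hl1]
        · have h1' : (j + 3) * (2 * ((k' + 3) * p) + 2 + m)
              ≤ (k' + 2) * (2 * ((k' + 3) * p) + 2 + m) :=
            Nat.mul_le_mul (by omega) le_rfl
          linarith [hub]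
    · linarith [hlp, Nat.zero_le (k' * p), hp, Nat.zero_le m]
    · linarith [hl1, Nat.zero_le (k' * p), Nat.zero_le (k' * m), hm,
        Nat.zero_le (k' * k' * p), hp]
end

section
/- Let k ≥ 3 and p ≥ 1 be integers, and let P and P'' be binary strings of length p. Let S be the binary string of length n = k(2kp+1) given by the concatenation S = 0^{(k−1)p} · P · 0 · 0^{kp} · 0^{kp} · 1 · 0^{kp} · 0^{kp} · 0 · P'' · 0^{(k−1)p} · (1^{2kp+1})^{k−3}. If l is an index with 1 ≤ l ≤ p, P[l] = 1 and P''[p+1−l] = 1, then the pair (i,d) with i = (k−1)p + l and d = 2kp + 1 + (p+1−l) is a k-cadence of S, and S[i+jd] = 1 for every j with 0 ≤ j < k. -/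
/-- Let `k ≥ 3`, `p ≥ 1`, let `P, P''` be binary strings of
length `p`, and let `S` be the binary string of length `n = k(2kp+1)`
`S = 0^{(k−1)p}·P·0·0^{kp} | 0^{kp}·1·0^{kp} | 0^{kp}·0·P''·0^{(k−1)p} | (1^{2kp+1})^{k−3}`.
If `1 ≤ l ≤ p`, `P[l] = 1` and `P''[p+1−l] = 1`, then
`(i,d) = ((k−1)p+l, 2kp+1+(p+1−l))` is a `k`-cadence of `S`, all of whose
elements carry the character `1`. -/
theorem stmt_12 (k p n : ℕ) (hk : 3 ≤ k) (hp : 1 ≤ p)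
    (hn : n = k * (2 * k * p + 1))
    (P P'' S : ℕ → Bool)
    (h1 : ∀ m, 1 ≤ m → m ≤ (k - 1) * p → S m = false)
    (h2 : ∀ l, 1 ≤ l → l ≤ p → S ((k - 1) * p + l) = P l)
    (h3 : ∀ m, k * p + 1 ≤ m → m ≤ 3 * k * p + 1 → S m = false)
    (h4 : S (3 * k * p + 2) = true)
    (h5 : ∀ m, 3 * k * p + 3 ≤ m → m ≤ 5 * k * p + 3 → S m = false)
    (h6 : ∀ l, 1 ≤ l → l ≤ p → S (5 * k * p + 3 + l) = P'' l)
    (h7 : ∀ m, 5 * k * p + 3 + p + 1 ≤ m → m ≤ 6 * k * p + 3 → S m = false)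
    (h8 : ∀ m, 6 * k * p + 4 ≤ m → m ≤ n → S m = true)
    (l : ℕ) (hl1 : 1 ≤ l) (hlp : l ≤ p)
    (hPl : P l = true) (hP''l : P'' (p + 1 - l) = true) :
    0 < 2 * k * p + 1 + (p + 1 - l) ∧
    1 ≤ (k - 1) * p + l ∧
    (k - 1) * p + l + (k - 1) * (2 * k * p + 1 + (p + 1 - l)) ≤ n ∧
    (k - 1) * p + l ≤ 2 * k * p + 1 + (p + 1 - l) ∧
    n < (k - 1) * p + l + k * (2 * k * p + 1 + (p + 1 - l)) ∧
    (∀ j, j < k → S ((k - 1) * p + l + j * (2 * k * p + 1 + (p + 1 - l))) = true) := by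

  obtain ⟨c, rfl⟩ : ∃ c, k = c + 3 := ⟨k - 3, by omega⟩
  obtain ⟨a, rfl⟩ : ∃ a, l = a + 1 := ⟨l - 1, by omega⟩
  obtain ⟨b, rfl⟩ : ∃ b, p = a + b + 1 := ⟨p - (a + 1), by omega⟩
  subst hn
  have hm : a + b + 1 + 1 - (a + 1) = b + 1 := by omega
  have hk1 : c + 3 - 1 = c + 2 := by omega
  rw [hm, hk1]
  rw [hm] at hP''l
  simp only [hk1] at h2
  have key : (c + 2) * (a + b + 1) + (a + 1)
      + (c + 2) * (2 * (c + 3) * (a + b + 1) + 1 + (b + 1))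
      + ((c + 3) * a + 2 * b + 2)
      = (c + 3) * (2 * (c + 3) * (a + b + 1) + 1) := by ring
  refine ⟨by positivity, by nlinarith, Nat.le.intro key, ?_, ?_, ?_⟩
  · have e4 : (c + 2) * (a + b + 1) + (a + 1)
        + ((c + 3) * a + (c + 5) * b + (c + 5))
        = 2 * (c + 3) * (a + b + 1) + 1 + (b + 1) := by ring
    exact Nat.le.intro e4
  · have e5 : (c + 2) * (a + b + 1) + (a + 1)
        + (c + 3) * (2 * (c + 3) * (a + b + 1) + 1 + (b + 1))
        = (c + 3) * (2 * (c + 3) * (a + b + 1) + 1)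
          + ((c + 3) * a + (2 * c + 5) * b + (2 * c + 6)) := by ring
    rw [e5]
    exact Nat.lt_add_of_pos_right (by positivity)
  · intro j hj
    rcases j with _ | _ | _ | j
    · simp only [Nat.zero_mul, Nat.add_zero]
      rw [h2 (a + 1) (by omega) (by omega)]
      exact hPl
    · have e : (c + 2) * (a + b + 1) + (a + 1)
          + 1 * (2 * (c + 3) * (a + b + 1) + 1 + (b + 1))
          = 3 * (c + 3) * (a + b + 1) + 2 := by ring
      rw [e]
      exact h4
    · have e : (c + 2) * (a + b + 1) + (a + 1)
          + 2 * (2 * (c + 3) * (a + b + 1) + 1 + (b + 1))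
          = 5 * (c + 3) * (a + b + 1) + 3 + (b + 1) := by ring
      rw [e]
      rw [h6 (b + 1) (by omega) (by omega)]
      exact hP''l
    · apply h8
      · have h3d : 3 * (2 * (c + 3) * (a + b + 1) + 1 + (b + 1))
            ≤ (j + 1 + 1 + 1) * (2 * (c + 3) * (a + b + 1) + 1 + (b + 1)) :=
          Nat.mul_le_mul_right _ (by omega)
        nlinarith
      · have h1' : (j + 1 + 1 + 1) * (2 * (c + 3) * (a + b + 1) + 1 + (b + 1))
            ≤ (c + 2) * (2 * (c + 3) * (a + b + 1) + 1 + (b + 1)) :=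
          Nat.mul_le_mul_right _ (by omega)
        calc (c + 2) * (a + b + 1) + (a + 1)
              + (j + 1 + 1 + 1) * (2 * (c + 3) * (a + b + 1) + 1 + (b + 1))
            ≤ (c + 2) * (a + b + 1) + (a + 1)
              + (c + 2) * (2 * (c + 3) * (a + b + 1) + 1 + (b + 1)) :=
              Nat.add_le_add_left h1' _
          _ ≤ (c + 3) * (2 * (c + 3) * (a + b + 1) + 1) := Nat.le.intro key
end

section
/- Let k ≥ 4 and p ≥ 1 be integers, and let P and P'' be binary strings of length p. Let S be the binary string of length n = k(2kp+1) given by the concatenation S = 0^{(k−1)p} · P · 0 · 0^{kp} · 0^{kp} · 1 · 0^{kp} · 0^{kp} · 0 · P'' · 0^{(k−1)p} · (1^{2kp+1})^{k−3}. Then every k-cadence (i,d) of S satisfies S[i] = 1; that is, every k-cadence of S is a k-cadence with character 1. -/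
/-- Let `k ≥ 4`, `p ≥ 1`, let `P, P''` be binary strings of
length `p`, and let `S` be the binary string of length `n = k(2kp+1)`
`S = 0^{(k−1)p}·P·0·0^{kp} | 0^{kp}·1·0^{kp} | 0^{kp}·0·P''·0^{(k−1)p} | (1^{2kp+1})^{k−3}`.
Then every `k`-cadence `(i,d)` of `S` satisfies `S[i] = 1`. -/
theorem stmt_13 (k p n : ℕ) (hk : 4 ≤ k) (hp : 1 ≤ p)
    (hn : n = k * (2 * k * p + 1))
    (P P'' S : ℕ → Bool)
    (h1 : ∀ m, 1 ≤ m → m ≤ (k - 1) * p → S m = false)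
    (h2 : ∀ l, 1 ≤ l → l ≤ p → S ((k - 1) * p + l) = P l)
    (h3 : ∀ m, k * p + 1 ≤ m → m ≤ 3 * k * p + 1 → S m = false)
    (h4 : S (3 * k * p + 2) = true)
    (h5 : ∀ m, 3 * k * p + 3 ≤ m → m ≤ 5 * k * p + 3 → S m = false)
    (h6 : ∀ l, 1 ≤ l → l ≤ p → S (5 * k * p + 3 + l) = P'' l)
    (h7 : ∀ m, 5 * k * p + 3 + p + 1 ≤ m → m ≤ 6 * k * p + 3 → S m = false)
    (h8 : ∀ m, 6 * k * p + 4 ≤ m → m ≤ n → S m = true) :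
    ∀ i d : ℕ, 0 < d → 1 ≤ i → i + (k - 1) * d ≤ n →
      (∀ j, j < k → S (i + j * d) = S i) → i ≤ d → n < i + k * d →
      S i = true := by
  intro i d hd hi hle hall hid hgt
  by_contra hfalse
  have hSi : S i = false := by revert hfalse; cases S i <;> simp
  have hlast : S (i + (k - 1) * d) = false := by
    rw [hall (k - 1) (by omega)]; exact hSi
  have hle' : i + (k - 1) * d ≤ 6 * k * p + 3 := by
    by_contra hc
    have := h8 (i + (k - 1) * d) (by omega) hle
    rw [hlast] at this; simp at this
  obtain ⟨q, rfl⟩ : ∃ q, k = q + 4 := ⟨k - 4, by omega⟩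
  have hq : q + 4 - 1 = q + 3 := by omega
  rw [hq] at hle'
  subst hn
  rw [hq] at hle
  have hdge : 2 * (q + 4) * (q + 1) * p + q + 1 ≤ d := by nlinarith [hle', hgt]
  have hm := Nat.mul_le_mul_left (q + 3) hdge
  have hfin : 6 * (q + 4) * p + 3 < i + (q + 3) * d := by
    have h0 : 6 * (q + 4) * p + 3 <
        1 + (q + 3) * (2 * (q + 4) * (q + 1) * p + q + 1) := by
      have e : 1 + (q + 3) * (2 * (q + 4) * (q + 1) * p + q + 1) =
          (6 * (q + 4) * p + 3) +
            ((2 * q ^ 3 + 16 * q ^ 2 + 32 * q) * p + (q ^ 2 + 4 * q + 1)) := by ring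
      have h0' : 0 < (2 * q ^ 3 + 16 * q ^ 2 + 32 * q) * p + (q ^ 2 + 4 * q + 1) := by
        positivity
      linarith
    calc 6 * (q + 4) * p + 3
        < 1 + (q + 3) * (2 * (q + 4) * (q + 1) * p + q + 1) := h0
      _ ≤ i + (q + 3) * d := Nat.add_le_add hi hm
  omega
end

section
/- Let p ≥ 1 be an integer and let P and P'' be binary strings of length p. Let S be the string of length n = 3(6p+1) over the alphabet {0,1,2} given by the concatenation S = 0^{2p} · P · 0 · 0^{3p} · 2^{3p} · 1 · 2^{3p} · 0^{3p} · 0 · P'' · 0^{2p}. Then S has a 3-cadence if and only if there exists an index l with 1 ≤ l ≤ p, P[l] = 1 and P''[p+1−l] = 1. -/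
/-- Let `p ≥ 1`, let `P, P''` be binary strings of length
`p` (over `{0,1} ⊆ {0,1,2}`), and let `S` be the ternary string of length
`n = 3(6p+1)` given by
`S = 0^{2p}·P·0·0^{3p} | 2^{3p}·1·2^{3p} | 0^{3p}·0·P''·0^{2p}`.
Then `S` has a 3-cadence iff there is an `l` with `1 ≤ l ≤ p`, `P[l] = 1` and
`P''[p+1−l] = 1`. -/
theorem stmt_14 (p n : ℕ) (hp : 1 ≤ p) (hn : n = 3 * (6 * p + 1))
    (P P'' : ℕ → Fin 3)
    (hPbin : ∀ l, 1 ≤ l → l ≤ p → P l = 0 ∨ P l = 1)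
    (hP''bin : ∀ l, 1 ≤ l → l ≤ p → P'' l = 0 ∨ P'' l = 1)
    (S : ℕ → Fin 3)
    (h1 : ∀ m, 1 ≤ m → m ≤ 2 * p → S m = 0)
    (h2 : ∀ l, 1 ≤ l → l ≤ p → S (2 * p + l) = P l)
    (h3 : ∀ m, 3 * p + 1 ≤ m → m ≤ 6 * p + 1 → S m = 0)
    (h4 : ∀ m, 6 * p + 2 ≤ m → m ≤ 9 * p + 1 → S m = 2)
    (h5 : S (9 * p + 2) = 1)
    (h6 : ∀ m, 9 * p + 3 ≤ m → m ≤ 12 * p + 2 → S m = 2)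
    (h7 : ∀ m, 12 * p + 3 ≤ m → m ≤ 15 * p + 3 → S m = 0)
    (h8 : ∀ l, 1 ≤ l → l ≤ p → S (15 * p + 3 + l) = P'' l)
    (h9 : ∀ m, 16 * p + 4 ≤ m → m ≤ 18 * p + 3 → S m = 0) :
    (∃ i d : ℕ, 0 < d ∧ 1 ≤ i ∧ i + 2 * d ≤ n ∧
       S i = S (i + d) ∧ S (i + d) = S (i + 2 * d) ∧
       i ≤ d ∧ n < i + 3 * d) ↔
    (∃ l, 1 ≤ l ∧ l ≤ p ∧ P l = 1 ∧ P'' (p + 1 - l) = 1) := by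
  subst hn
  -- a case analysis on where a position lies
  have hcase : ∀ m, 1 ≤ m → m ≤ 18 * p + 3 →
      (m ≤ 2 * p ∧ S m = 0) ∨
      (2 * p + 1 ≤ m ∧ m ≤ 3 * p ∧ S m = P (m - 2 * p)) ∨
      (3 * p + 1 ≤ m ∧ m ≤ 6 * p + 1 ∧ S m = 0) ∨
      (6 * p + 2 ≤ m ∧ m ≤ 9 * p + 1 ∧ S m = 2) ∨
      (m = 9 * p + 2 ∧ S m = 1) ∨
      (9 * p + 3 ≤ m ∧ m ≤ 12 * p + 2 ∧ S m = 2) ∨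
      (12 * p + 3 ≤ m ∧ m ≤ 15 * p + 3 ∧ S m = 0) ∨
      (15 * p + 4 ≤ m ∧ m ≤ 16 * p + 3 ∧ S m = P'' (m - (15 * p + 3))) ∨
      (16 * p + 4 ≤ m ∧ S m = 0) := by
    intro m hm1 hm2
    have hsplit : m ≤ 2 * p ∨ (2 * p + 1 ≤ m ∧ m ≤ 3 * p) ∨
        (3 * p + 1 ≤ m ∧ m ≤ 6 * p + 1) ∨ (6 * p + 2 ≤ m ∧ m ≤ 9 * p + 1) ∨
        m = 9 * p + 2 ∨ (9 * p + 3 ≤ m ∧ m ≤ 12 * p + 2) ∨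
        (12 * p + 3 ≤ m ∧ m ≤ 15 * p + 3) ∨ (15 * p + 4 ≤ m ∧ m ≤ 16 * p + 3) ∨
        16 * p + 4 ≤ m := by omega
    rcases hsplit with h | h | h | h | h | h | h | h | h
    · exact Or.inl ⟨h, h1 m hm1 h⟩
    · refine Or.inr (Or.inl ⟨h.1, h.2, ?_⟩)
      have := h2 (m - 2 * p) (by omega) (by omega)
      rwa [show 2 * p + (m - 2 * p) = m by omega] at this
    · exact Or.inr (Or.inr (Or.inl ⟨h.1, h.2, h3 m h.1 h.2⟩))
    · exact Or.inr (Or.inr (Or.inr (Or.inl ⟨h.1, h.2, h4 m h.1 h.2⟩)))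
    · exact Or.inr (Or.inr (Or.inr (Or.inr (Or.inl ⟨h, h ▸ h5⟩))))
    · exact Or.inr (Or.inr (Or.inr (Or.inr (Or.inr (Or.inl ⟨h.1, h.2, h6 m h.1 h.2⟩)))))
    · exact Or.inr (Or.inr (Or.inr (Or.inr (Or.inr (Or.inr (Or.inl ⟨h.1, h.2, h7 m h.1 h.2⟩))))))
    · refine Or.inr (Or.inr (Or.inr (Or.inr (Or.inr (Or.inr (Or.inr (Or.inl ⟨h.1, h.2, ?_⟩)))))))
      have := h8 (m - (15 * p + 3)) (by omega) (by omega)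
      rwa [show 15 * p + 3 + (m - (15 * p + 3)) = m by omega] at this
    · exact Or.inr (Or.inr (Or.inr (Or.inr (Or.inr (Or.inr (Or.inr (Or.inr ⟨h, h9 m h hm2⟩)))))))
  have hv0 : ∀ m, 1 ≤ m → m ≤ 18 * p + 3 → S m = 0 → m ≤ 6 * p + 1 ∨ 12 * p + 3 ≤ m := by
    intro m hm1 hm2 hS
    rcases hcase m hm1 hm2 with h | h | h | h | h | h | h | h | h
    · omega
    · rcases hPbin (m - 2 * p) (by omega) (by omega) with hb | hb <;> omega
    · omega
    · rw [h.2.2] at hS; exact absurd hS (by decide)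
    · rw [h.2] at hS; exact absurd hS (by decide)
    · rw [h.2.2] at hS; exact absurd hS (by decide)
    · omega
    · omega
    · omega
  have hv2 : ∀ m, 1 ≤ m → m ≤ 18 * p + 3 → S m = 2 → 6 * p + 2 ≤ m ∧ m ≤ 12 * p + 2 := by
    intro m hm1 hm2 hS
    rcases hcase m hm1 hm2 with h | h | h | h | h | h | h | h | h
    · rw [h.2] at hS; exact absurd hS (by decide)
    · rw [h.2.2] at hS
      rcases hPbin (m - 2 * p) (by omega) (by omega) with hb | hb <;>
        (rw [hb] at hS; exact absurd hS (by decide))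
    · rw [h.2.2] at hS; exact absurd hS (by decide)
    · omega
    · rw [h.2] at hS; exact absurd hS (by decide)
    · omega
    · rw [h.2.2] at hS; exact absurd hS (by decide)
    · rw [h.2.2] at hS
      rcases hP''bin (m - (15 * p + 3)) (by omega) (by omega) with hb | hb <;>
        (rw [hb] at hS; exact absurd hS (by decide))
    · rw [h.2] at hS; exact absurd hS (by decide)
  have hv1 : ∀ m, 1 ≤ m → m ≤ 18 * p + 3 → S m = 1 →
      (2 * p + 1 ≤ m ∧ m ≤ 3 * p ∧ P (m - 2 * p) = 1) ∨ m = 9 * p + 2 ∨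
      (15 * p + 4 ≤ m ∧ m ≤ 16 * p + 3 ∧ P'' (m - (15 * p + 3)) = 1) := by
    intro m hm1 hm2 hS
    rcases hcase m hm1 hm2 with h | h | h | h | h | h | h | h | h
    · rw [h.2] at hS; exact absurd hS (by decide)
    · exact Or.inl ⟨h.1, h.2.1, h.2.2.symm.trans hS⟩
    · rw [h.2.2] at hS; exact absurd hS (by decide)
    · rw [h.2.2] at hS; exact absurd hS (by decide)
    · exact Or.inr (Or.inl h.1)
    · rw [h.2.2] at hS; exact absurd hS (by decide)
    · rw [h.2.2] at hS; exact absurd hS (by decide)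
    · exact Or.inr (Or.inr ⟨h.1, h.2.1, h.2.2.symm.trans hS⟩)
    · rw [h.2] at hS; exact absurd hS (by decide)
  constructor
  · rintro ⟨i, d, hd, hi1, hile, he1, he2, hid, hn3⟩
    -- basic bounds on d
    have hdlo : 18 * p + 4 ≤ 4 * d := by omega
    have hdhi : 2 * d ≤ 18 * p + 2 := by omega
    have hi2 : i ≤ 18 * p + 3 := by omega
    have hid1 : 1 ≤ i + d := by omega
    have hid2 : i + d ≤ 18 * p + 3 := by omega
    have hi2d1 : 1 ≤ i + 2 * d := by omega
    -- case on the common character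
    have hfin : ∀ x : Fin 3, x = 0 ∨ x = 1 ∨ x = 2 := by decide
    rcases hfin (S i) with hc | hc | hc
    · -- all zeros: impossible
      have k1 := hv0 i hi1 hi2 hc
      have k2 := hv0 (i + d) hid1 hid2 (he1.symm.trans hc)
      have k3 := hv0 (i + 2 * d) hi2d1 (by omega) (he2.symm.trans (he1.symm.trans hc))
      omega
    · -- common character 1
      have k1 := hv1 i hi1 hi2 hc
      have k2 := hv1 (i + d) hid1 hid2 (he1.symm.trans hc)
      have k3 := hv1 (i + 2 * d) hi2d1 (by omega) (he2.symm.trans (he1.symm.trans hc))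
      -- i must be in the P block
      have k1' : 2 * p + 1 ≤ i ∧ i ≤ 3 * p ∧ P (i - 2 * p) = 1 := by
        rcases k1 with h | h | h
        · exact h
        · omega
        · omega
      -- i + 2d must be in the P'' block
      have k3' : 15 * p + 4 ≤ i + 2 * d ∧ i + 2 * d ≤ 16 * p + 3 ∧
          P'' (i + 2 * d - (15 * p + 3)) = 1 := by
        rcases k3 with h | h | h
        · omega
        · omega
        · exact h
      -- i + d must be the middle 1
      have k2' : i + d = 9 * p + 2 := by
        rcases k2 with h | h | h
        · omega
        · exact h
        · omega
      refine ⟨i - 2 * p, by omega, by omega, k1'.2.2, ?_⟩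
      have : p + 1 - (i - 2 * p) = i + 2 * d - (15 * p + 3) := by omega
      rw [this]; exact k3'.2.2
    · -- common character 2: impossible
      have k1 := hv2 i hi1 hi2 hc
      have k3 := hv2 (i + 2 * d) hi2d1 (by omega) (he2.symm.trans (he1.symm.trans hc))
      omega
  · rintro ⟨l, hl1, hl2, hPl, hP''l⟩
    refine ⟨2 * p + l, 7 * p + 2 - l, by omega, by omega, by omega, ?_, ?_, by omega, by omega⟩
    · have e1 : S (2 * p + l) = P l := h2 l hl1 hl2
      have e2 : 2 * p + l + (7 * p + 2 - l) = 9 * p + 2 := by omega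
      rw [e1, hPl, e2, h5]
    · have e2 : 2 * p + l + (7 * p + 2 - l) = 9 * p + 2 := by omega
      have e3 : 2 * p + l + 2 * (7 * p + 2 - l) = 15 * p + 3 + (p + 1 - l) := by omega
      have e4 : S (15 * p + 3 + (p + 1 - l)) = P'' (p + 1 - l) :=
        h8 (p + 1 - l) (by omega) (by omega)
      rw [e2, h5, e3, e4, hP''l]
end

section
/- Let p ≥ 1 be an integer and let P and P' be binary strings of length p. Let P'' be the binary string of length 2p defined by P''[2l−1] = P''[2l] = P'[l] for 1 ≤ l ≤ p (each character of P' duplicated). Let S = 1 · 0^p · P · P'' be the binary string of length 4p+1, and let L = {1} and R = {2p+2, 2p+3, …, 4p+1}. Then S has an L-R-3-cadence if and only if there exists an index l with 1 ≤ l ≤ p and P[l] = P'[l] = 1. -/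
/-- Let `p ≥ 1`, let `P, P'` be binary strings of length
`p`, let `P''` (of length `2p`) duplicate each character of `P'`, and let
`S = 1·0^p·P·P''` be the binary string of length `4p+1`.  With `L = {1}` and
`R = {2p+2,…,4p+1}`, the string `S` has an `L`-`R`-3-cadence iff there is an
`l` with `1 ≤ l ≤ p` and `P[l] = P'[l] = 1`. -/
theorem stmt_15 (p : ℕ) (hp : 1 ≤ p) (P P' P'' S : ℕ → Bool)
    (hP'' : ∀ l, 1 ≤ l → l ≤ p → P'' (2 * l - 1) = P' l ∧ P'' (2 * l) = P' l)
    (hS1 : S 1 = true)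
    (hS2 : ∀ m, 2 ≤ m → m ≤ p + 1 → S m = false)
    (hS3 : ∀ l, 1 ≤ l → l ≤ p → S (p + 1 + l) = P l)
    (hS4 : ∀ l, 1 ≤ l → l ≤ 2 * p → S (2 * p + 1 + l) = P'' l) :
    (∃ i d : ℕ, 0 < d ∧ i = 1 ∧ 2 * p + 2 ≤ i + 2 * d ∧ i + 2 * d ≤ 4 * p + 1 ∧
       1 ≤ i ∧ S i = S (i + d) ∧ S (i + d) = S (i + 2 * d)) ↔
    (∃ l, 1 ≤ l ∧ l ≤ p ∧ P l = true ∧ P' l = true) := by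
  constructor
  · rintro ⟨i, d, hd, rfl, h1, h2, -, hab, hbc⟩
    have hd1 : p + 1 ≤ d := by omega
    have hd2 : d ≤ 2 * p := by omega
    refine ⟨d - p, by omega, by omega, ?_, ?_⟩
    · have h := hS3 (d - p) (by omega) (by omega)
      have he : p + 1 + (d - p) = 1 + d := by omega
      rw [he] at h
      rw [← h, ← hab, hS1]
    · have h3 := hS4 (2 * (d - p)) (by omega) (by omega)
      have he : 2 * p + 1 + 2 * (d - p) = 1 + 2 * d := by omega
      rw [he] at h3
      have h4 := (hP'' (d - p) (by omega) (by omega)).2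
      rw [← h4, ← h3, ← hbc, ← hab, hS1]
  · rintro ⟨l, hl1, hl2, hPl, hP'l⟩
    refine ⟨1, p + l, by omega, rfl, by omega, by omega, le_refl 1, ?_, ?_⟩
    · have h := hS3 l hl1 hl2
      have he : p + 1 + l = 1 + (p + l) := by omega
      rw [he] at h
      rw [hS1, h, hPl]
    · have h3 := hS4 (2 * l) (by omega) (by omega)
      have he : 2 * p + 1 + 2 * l = 1 + 2 * (p + l) := by omega
      rw [he] at h3
      have h4 := (hP'' l hl1 hl2).2
      have h := hS3 l hl1 hl2
      have he2 : p + 1 + l = 1 + (p + l) := by omega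
      rw [he2] at h
      rw [h, hPl, h3, h4, hP'l]
end

section
/- Let S be a string of length n over the alphabet {0,1,2} and let L, R ⊆ {1,…,n} be such that S[a] ∈ {0,2} for every a ∈ L ∪ R, S[a] ∈ {0,1} for every a ∈ {1,…,n} \ (L ∪ R), and for all i ∈ L and r ∈ R with i < r and i ≡ r (mod 2) the midpoint (i+r)/2 does not lie in L ∪ R. Let S' be the binary string of length n with S'[a] = 0 if S[a] = 0 and S'[a] = 1 otherwise. Then for all integers i, d with d > 0, 1 ≤ i and i+2d ≤ n, the following are equivalent: (1) (i,d) is an equidistant occurrence of the pattern 212 in S starting in L and ending in R, i.e., S[i] = 2, S[i+d] = 1, S[i+2d] = 2, i ∈ L and i+2d ∈ R; (2) (i,d) is an L-R-3-cadence of S' with S'[i] = 1. -/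
/-- Let `S` be a ternary string of length `n` whose
positions in `L ∪ R` carry characters in `{0,2}`, whose positions outside
`L ∪ R` carry characters in `{0,1}`, and such that the midpoint of any two
equal-parity positions `i ∈ L`, `r ∈ R` with `i < r` is outside `L ∪ R`.
Let `S'` be the binary string obtained from `S` by replacing every `2` by `1`.
Then `(i,d)` is an equidistant occurrence of the pattern `212` in `S` starting
in `L` and ending in `R` iff `(i,d)` is an `L`-`R`-3-cadence of `S'` with
character `1`. -/
theorem stmt_16 (n : ℕ) (S : ℕ → Fin 3) (S' : ℕ → Bool) (L R : Set ℕ)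
    (hL : L ⊆ Set.Icc 1 n) (hR : R ⊆ Set.Icc 1 n)
    (hLR2 : ∀ a ∈ L ∪ R, S a = 0 ∨ S a = 2)
    (hout : ∀ a, 1 ≤ a → a ≤ n → a ∉ L ∪ R → S a = 0 ∨ S a = 1)
    (hmid : ∀ i ∈ L, ∀ r ∈ R, i < r → i % 2 = r % 2 → (i + r) / 2 ∉ L ∪ R)
    (hS' : ∀ a, 1 ≤ a → a ≤ n →
      (S a = 0 → S' a = false) ∧ (S a ≠ 0 → S' a = true)) :
    ∀ i d : ℕ, 0 < d → 1 ≤ i → i + 2 * d ≤ n →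
      ((S i = 2 ∧ S (i + d) = 1 ∧ S (i + 2 * d) = 2 ∧ i ∈ L ∧ i + 2 * d ∈ R) ↔
       (i ∈ L ∧ i + 2 * d ∈ R ∧
        S' i = S' (i + d) ∧ S' (i + d) = S' (i + 2 * d) ∧ S' i = true)) := by

  intro i d hd hi hn
  have hi1 : 1 ≤ i := hi
  have hin : i ≤ n := by omega
  have hmd : 1 ≤ i + d := by omega
  have hmdn : i + d ≤ n := by omega
  have hr1 : 1 ≤ i + 2 * d := by omega
  have hS'i := hS' i hi1 hin
  have hS'm := hS' (i + d) hmd hmdn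
  have hS'r := hS' (i + 2 * d) hr1 hn
  constructor
  · rintro ⟨h1, h2, h3, hL', hR'⟩
    have e1 : S' i = true := hS'i.2 (by simp [h1])
    have e2 : S' (i + d) = true := hS'm.2 (by simp [h2])
    have e3 : S' (i + 2 * d) = true := hS'r.2 (by simp [h3])
    exact ⟨hL', hR', by rw [e1, e2], by rw [e2, e3], e1⟩
  · rintro ⟨hL', hR', e1, e2, e3⟩
    have si : S i ≠ 0 := by
      intro h; have := hS'i.1 h; rw [e3] at this; exact absurd this (by simp)
    have hSi : S i = 2 := (hLR2 i (Or.inl hL')).resolve_left si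
    have sr : S (i + 2 * d) ≠ 0 := by
      intro h; have := hS'r.1 h
      rw [← e2, ← e1, e3] at this; exact absurd this (by simp)
    have hSr : S (i + 2 * d) = 2 := (hLR2 _ (Or.inr hR')).resolve_left sr
    have hmnot : i + d ∉ L ∪ R := by
      have := hmid i hL' (i + 2 * d) hR' (by omega) (by omega)
      have heq : (i + (i + 2 * d)) / 2 = i + d := by omega
      rwa [heq] at this
    have sm : S (i + d) ≠ 0 := by
      intro h; have := hS'm.1 h
      rw [← e1, e3] at this; exact absurd this (by simp)
    have hSm : S (i + d) = 1 := (hout (i + d) hmd hmdn hmnot).resolve_left sm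
    exact ⟨hSi, hSm, hSr, hL', hR'⟩
end

section
/- Let S be a string of length n, and let a and r be positive integers with 3a ≤ r and 3r − a > 2n. Set L = {1,…,a} and R = {r, r+1, …, n}. Then every L-R-3-cadence of S is a 3-cadence of S; i.e., every 3-sub-cadence (i,d) of S with i ≤ a and i+2d ≥ r satisfies i − d ≤ 0 and i + 3d > n. -/
/-- Let `a, r` be positive integers with `3a ≤ r` and
`3r − a > 2n`, and set `L = {1,…,a}`, `R = {r,…,n}`.  Then every
`L`-`R`-3-cadence of a string `S` of length `n` is a 3-cadence: every
3-sub-cadence `(i,d)` with `i ≤ a` and `i + 2d ≥ r` satisfies `i − d ≤ 0`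
and `i + 3d > n`. -/
theorem stmt_18 {α : Type*} (n a r : ℕ) (S : ℕ → α)
    (ha : 1 ≤ a) (hr : 1 ≤ r) (h3a : 3 * a ≤ r) (h3r : 3 * r - a > 2 * n) :
    ∀ i d : ℕ, 0 < d → 1 ≤ i → i + 2 * d ≤ n →
      S i = S (i + d) → S (i + d) = S (i + 2 * d) →
      i ≤ a → r ≤ i + 2 * d →
      i ≤ d ∧ n < i + 3 * d := by
  intro i d hd hi hn h1 h2 hia hr2
  omega
end
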